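/- arXiv:1210.3120 — 5 statements merged into one kernel-verified Lean document; each statement's English description precedes it below -/
import Mathlib

section
/- Two set compositions F and G of a finite set I satisfy FG = GF if and only if F and G admit a common refinement, i.e., there exists a composition H of I with F ≤ H and G ≤ H. -/
/-- `F` is a composition of the finite set `I`. -/
def IsComposition {α : Type*} [DecidableEq α] (I : Finset α) (F : List (Finset α)) : Prop :=
  (∀ B ∈ F, B ≠ ∅) ∧ F.Pairwise (fun A B => A ∩ B = ∅) ∧ F.foldr (· ∪ ·) ∅ = I

/-- The Tits product of two set compositions. -/
def tits {α : Type*} [DecidableEq α] (F G : List (Finset α)) : List (Finset α) :=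
  (F.map fun S => (G.map fun T => S ∩ T).filter fun T => decide (T ≠ ∅)).flatten

/-- `G` refines `F` (written `F ≤ G`). -/
def Refines {α : Type*} [DecidableEq α] (F G : List (Finset α)) : Prop :=
  ∃ Gs : List (List (Finset α)),
    List.Forall₂ (fun B g => IsComposition B g) F Gs ∧ G = Gs.flatten

namespace TitsProof

variable {α : Type*} [DecidableEq α]

abbrev unionL (l : List (Finset α)) : Finset α := l.foldr (· ∪ ·) ∅
@[simp] lemma unionL_nil : unionL ([] : List (Finset α)) = ∅ := rfl
@[simp] lemma unionL_cons (B : Finset α) (l) : unionL (B :: l) = B ∪ unionL l := rfl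
lemma mem_unionL {l : List (Finset α)} {a : α} : a ∈ unionL l ↔ ∃ B ∈ l, a ∈ B := by
  induction l with
  | nil => simp
  | cons B l ih => simp [ih]
lemma unionL_append (l₁ l₂ : List (Finset α)) : unionL (l₁ ++ l₂) = unionL l₁ ∪ unionL l₂ := by
  induction l₁ with
  | nil => simp
  | cons B l ih => simp [ih, Finset.union_assoc]
lemma subset_unionL {l : List (Finset α)} {B} (h : B ∈ l) : B ⊆ unionL l :=
  fun a ha => mem_unionL.mpr ⟨B, h, ha⟩
lemma unionL_ne_empty {l : List (Finset α)} (hl : l ≠ []) (h : ∀ B ∈ l, B ≠ ∅) :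
    unionL l ≠ ∅ := by
  cases l with
  | nil => simp at hl
  | cons B l =>
    intro hU
    apply h B (by simp)
    have hsub : B ⊆ unionL (B :: l) := subset_unionL (by simp)
    rw [hU] at hsub
    exact Finset.subset_empty.mp hsub
lemma unionL_inter_unionL {l₁ l₂ : List (Finset α)}
    (h : ∀ A ∈ l₁, ∀ B ∈ l₂, A ∩ B = ∅) : unionL l₁ ∩ unionL l₂ = ∅ := by
  rw [Finset.eq_empty_iff_forall_notMem]
  intro a ha
  rw [Finset.mem_inter, mem_unionL, mem_unionL] at ha
  obtain ⟨⟨A, hA, haA⟩, B, hB, haB⟩ := ha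
  have h2 : a ∈ A ∩ B := Finset.mem_inter.mpr ⟨haA, haB⟩
  rw [h A hA B hB] at h2
  simp at h2
lemma inter_empty_of_subsets {A B A' B' : Finset α} (hA : A ⊆ A') (hB : B ⊆ B')
    (h : A' ∩ B' = ∅) : A ∩ B = ∅ :=
  Finset.subset_empty.mp (h ▸ Finset.inter_subset_inter hA hB)
def chunk (S : Finset α) (G : List (Finset α)) : List (Finset α) :=
  (G.map fun T => S ∩ T).filter fun T => decide (T ≠ ∅)
lemma tits_eq (F G : List (Finset α)) : tits F G = (F.map fun S => chunk S G).flatten := rfl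
@[simp] lemma tits_nil (G : List (Finset α)) : tits [] G = [] := rfl
@[simp] lemma tits_nil_right (F : List (Finset α)) : tits F [] = [] := by
  rw [tits_eq, List.flatten_eq_nil_iff]
  intro l hl
  simp only [List.mem_map] at hl
  obtain ⟨S, _, rfl⟩ := hl
  rfl
lemma tits_cons (S : Finset α) (F G : List (Finset α)) :
    tits (S :: F) G = chunk S G ++ tits F G := by
  rw [tits_eq, List.map_cons, List.flatten_cons, tits_eq]
lemma chunk_cons_of_ne {S T : Finset α} (G : List (Finset α)) (h : S ∩ T ≠ ∅) :
    chunk S (T :: G) = (S ∩ T) :: chunk S G := by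
  simp [chunk, List.filter_cons, h]
lemma chunk_cons_of_eq {S T : Finset α} (G : List (Finset α)) (h : S ∩ T = ∅) :
    chunk S (T :: G) = chunk S G := by
  simp [chunk, List.filter_cons, h]
lemma chunk_eq_nil {S : Finset α} {G : List (Finset α)} (h : ∀ T ∈ G, S ∩ T = ∅) :
    chunk S G = [] := by
  induction G with
  | nil => rfl
  | cons T G ih =>
    rw [chunk_cons_of_eq G (h T (by simp))]
    exact ih fun T' hT' => h T' (by simp [hT'])
lemma chunk_congr {S S' : Finset α} {G : List (Finset α)} (h : ∀ T ∈ G, S ∩ T = S' ∩ T) :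
    chunk S G = chunk S' G := by
  unfold chunk
  rw [List.map_congr_left fun T hT => h T hT]
lemma tits_right_of_empty {F : List (Finset α)} {T : Finset α} {G : List (Finset α)}
    (h : ∀ S ∈ F, S ∩ T = ∅) : tits F (T :: G) = tits F G := by
  rw [tits_eq, tits_eq]
  congr 1
  exact List.map_congr_left fun S hS => chunk_cons_of_eq G (h S hS)
lemma tits_right_congr_head {F : List (Finset α)} {T T' : Finset α} {G : List (Finset α)}
    (h : ∀ S ∈ F, S ∩ T = S ∩ T') : tits F (T :: G) = tits F (T' :: G) := by
  rw [tits_eq, tits_eq]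
  congr 1
  apply List.map_congr_left
  intro S hS
  unfold chunk
  rw [List.map_cons, List.map_cons, h S hS]
lemma forall₂_mem_left {β γ : Type*} {R : β → γ → Prop} :
    ∀ {l₁ : List β} {l₂ : List γ}, List.Forall₂ R l₁ l₂ → ∀ a ∈ l₁, ∃ b ∈ l₂, R a b := by
  intro l₁ l₂ h
  induction h with
  | nil => simp
  | @cons a b l₁ l₂ hab h ih =>
    intro x hx
    rcases List.mem_cons.mp hx with rfl | hx
    · exact ⟨b, by simp, hab⟩
    · obtain ⟨c, hc, hrc⟩ := ih x hx
      exact ⟨c, by simp [hc], hrc⟩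

-- NEW PART: keyStep

lemma keyStep {n : ℕ}
    (ih : ∀ H F G : List (Finset α), H.length ≤ n →
      H.Pairwise (fun A B => A ∩ B = ∅) →
      (∀ B ∈ F, B ≠ ∅) → (∀ B ∈ G, B ≠ ∅) →
      Refines F H → Refines G H → tits F G = tits G F)
    (H : List (Finset α)) (S T : Finset α) (F' G' : List (Finset α))
    (hlen : H.length ≤ n + 1)
    (hHpw : H.Pairwise fun A B => A ∩ B = ∅)
    (hF : ∀ B ∈ S :: F', B ≠ ∅) (hG : ∀ B ∈ T :: G', B ≠ ∅)
    (hs ks : List (Finset α)) (Hs' Ks' : List (List (Finset α)))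
    (hhs : IsComposition S hs) (hks : IsComposition T ks)
    (hFs : List.Forall₂ (fun B g => IsComposition B g) F' Hs')
    (hGs : List.Forall₂ (fun B g => IsComposition B g) G' Ks')
    (hH1 : H = hs ++ Hs'.flatten) (hH2 : H = ks ++ Ks'.flatten)
    (hle : hs.length ≤ ks.length) :
    tits (S :: F') (T :: G') = tits (T :: G') (S :: F') := by
  have hSne : S ≠ ∅ := hF S (by simp)
  have hSU : unionL hs = S := hhs.2.2
  have hTU : unionL ks = T := hks.2.2
  have hhsne : hs ≠ [] := by
    intro h
    subst h
    exact hSne (by simpa using hSU.symm)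
  -- hs is a prefix of ks
  have hks_take : ks = hs ++ ks.drop hs.length := by
    have h1 : hs = H.take hs.length := by rw [hH1, List.take_left]
    have h3 : ks.take hs.length = hs := by
      have h2 : ks = H.take ks.length := by rw [hH2, List.take_left]
      rw [h2, List.take_take, min_eq_left hle, ← h1]
    conv_lhs => rw [← List.take_append_drop hs.length ks]
    rw [h3]
  set D := ks.drop hs.length with hD
  have hH3 : H = hs ++ (D ++ Ks'.flatten) := by
    rw [hH2]
    conv_lhs => rw [hks_take]
    rw [List.append_assoc]
  have hpw3 := hHpw
  rw [hH3, List.pairwise_append] at hpw3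
  obtain ⟨hpw_hs, hpw_rest, hcross⟩ := hpw3
  have hSD : S ∩ unionL D = ∅ := by
    rw [← hSU]
    apply unionL_inter_unionL
    intro A hA B hB
    exact hcross A hA B (List.mem_append_left _ hB)
  have hSK : S ∩ unionL Ks'.flatten = ∅ := by
    rw [← hSU]
    apply unionL_inter_unionL
    intro A hA B hB
    exact hcross A hA B (List.mem_append_right _ hB)
  have hpw1 := hHpw
  rw [hH1, List.pairwise_append] at hpw1
  have hSH : S ∩ unionL Hs'.flatten = ∅ := by
    rw [← hSU]
    exact unionL_inter_unionL hpw1.2.2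
  have hG'sub : ∀ T'' ∈ G', T'' ⊆ unionL Ks'.flatten := by
    intro T'' hT''
    obtain ⟨k, hk, hkc⟩ := forall₂_mem_left hGs T'' hT''
    intro a ha
    rw [← hkc.2.2] at ha
    obtain ⟨B, hB, haB⟩ := mem_unionL.mp ha
    exact mem_unionL.mpr ⟨B, List.mem_flatten.mpr ⟨k, hk, hB⟩, haB⟩
  have hF'sub : ∀ S'' ∈ F', S'' ⊆ unionL Hs'.flatten := by
    intro S'' hS''
    obtain ⟨g, hg, hgc⟩ := forall₂_mem_left hFs S'' hS''
    intro a ha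
    rw [← hgc.2.2] at ha
    obtain ⟨B, hB, haB⟩ := mem_unionL.mp ha
    exact mem_unionL.mpr ⟨B, List.mem_flatten.mpr ⟨g, hg, hB⟩, haB⟩
  have hSG' : ∀ T'' ∈ G', S ∩ T'' = ∅ := fun T'' h =>
    inter_empty_of_subsets (Finset.Subset.refl S) (hG'sub T'' h) hSK
  have hG'S : ∀ T'' ∈ G', T'' ∩ S = ∅ := fun T'' h => by
    rw [Finset.inter_comm]; exact hSG' T'' h
  have hSF' : ∀ S'' ∈ F', S ∩ S'' = ∅ := fun S'' h =>
    inter_empty_of_subsets (Finset.Subset.refl S) (hF'sub S'' h) hSH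
  have hF'S : ∀ S'' ∈ F', S'' ∩ S = ∅ := fun S'' h => by
    rw [Finset.inter_comm]; exact hSF' S'' h
  rcases eq_or_lt_of_le hle with heq | hlt
  · -- equal lengths: hs = ks, S = T
    have hDnil : D = [] := by
      have hlks : ks.length = hs.length + D.length := by
        conv_lhs => rw [hks_take]
        rw [List.length_append]
      rw [← List.length_eq_zero_iff]
      omega
    have hkshs : ks = hs := by rw [hks_take, hDnil, List.append_nil]
    have hTS : T = S := by rw [← hTU, hkshs, hSU]
    subst hTS
    rw [tits_cons, tits_cons]
    rw [chunk_cons_of_ne G' (by rw [Finset.inter_self]; exact hSne)]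
    rw [chunk_cons_of_ne F' (by rw [Finset.inter_self]; exact hSne)]
    rw [Finset.inter_self]
    rw [chunk_eq_nil hSG', chunk_eq_nil hSF']
    rw [tits_right_of_empty hF'S, tits_right_of_empty hG'S]
    have hflat_eq : Hs'.flatten = Ks'.flatten := by
      have h5 := hH1.symm.trans hH2
      rw [hkshs] at h5
      exact List.append_cancel_left h5
    have hlen2 : Hs'.flatten.length ≤ n := by
      have h1 : H.length = hs.length + Hs'.flatten.length := by rw [hH1, List.length_append]
      have h2 : 0 < hs.length := List.length_pos_iff.mpr hhsne
      omega
    have hmain := ih Hs'.flatten F' G' hlen2 hpw1.2.1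
      (fun B hB => hF B (by simp [hB])) (fun B hB => hG B (by simp [hB]))
      ⟨Hs', hFs, rfl⟩ ⟨Ks', hGs, hflat_eq⟩
    rw [hmain]
  · -- strict: D nonempty
    have hDne : D ≠ [] := by
      intro h
      have hlks : ks.length = hs.length + D.length := by
        conv_lhs => rw [hks_take]
        rw [List.length_append]
      rw [h] at hlks
      simp at hlks
      omega
    have hDblocks : ∀ B ∈ D, B ≠ ∅ := fun B hB =>
      hks.1 B (by rw [hks_take]; exact List.mem_append_right _ hB)
    have hUDne : unionL D ≠ ∅ := unionL_ne_empty hDne hDblocks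
    have hTSD : T = S ∪ unionL D := by
      rw [← hTU]
      conv_lhs => rw [hks_take]
      rw [unionL_append, hSU]
    have hST : S ⊆ T := by rw [hTSD]; exact Finset.subset_union_left
    have hSTS : S ∩ T = S := Finset.inter_eq_left.mpr hST
    have hTSS : T ∩ S = S := by rw [Finset.inter_comm]; exact hSTS
    have hcongr : ∀ S'' ∈ F', S'' ∩ T = S'' ∩ unionL D := by
      intro S'' hS''
      rw [hTSD, Finset.inter_union_distrib_left, hF'S S'' hS'', Finset.empty_union]
    have hcongr2 : ∀ S'' ∈ F', T ∩ S'' = unionL D ∩ S'' := by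
      intro S'' hS''
      rw [Finset.inter_comm, Finset.inter_comm (unionL D)]
      exact hcongr S'' hS''
    rw [tits_cons, tits_cons]
    rw [chunk_cons_of_ne G' (by rw [hSTS]; exact hSne), hSTS, chunk_eq_nil hSG']
    rw [chunk_cons_of_ne F' (by rw [hTSS]; exact hSne), hTSS]
    rw [tits_right_of_empty hG'S]
    rw [tits_right_congr_head hcongr]
    rw [chunk_congr hcongr2]
    -- goal: [S] ++ tits F' (unionL D :: G') = (S :: chunk (unionL D) F') ++ tits G' F'
    have hH2' : Hs'.flatten = D ++ Ks'.flatten := by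
      have h5 := hH1.symm.trans hH3
      exact List.append_cancel_left h5
    have hDsub : List.Sublist D ks := by
      conv_rhs => rw [hks_take]
      exact List.sublist_append_right hs D
    have hcompUD : IsComposition (unionL D) D := ⟨hDblocks, hks.2.1.sublist hDsub, rfl⟩
    have hlen2 : (D ++ Ks'.flatten).length ≤ n := by
      have h1 : H.length = hs.length + (D ++ Ks'.flatten).length := by
        rw [hH3, List.length_append]
      have h2 : 0 < hs.length := List.length_pos_iff.mpr hhsne
      omega
    have hmain := ih (D ++ Ks'.flatten) F' (unionL D :: G') hlen2 hpw_rest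
      (fun B hB => hF B (by simp [hB]))
      (by
        intro B hB
        rcases List.mem_cons.mp hB with rfl | hB
        · exact hUDne
        · exact hG B (by simp [hB]))
      ⟨Hs', hFs, hH2'.symm⟩
      ⟨D :: Ks', List.Forall₂.cons hcompUD hGs, by simp⟩
    rw [tits_cons] at hmain
    simp only [List.cons_append, List.nil_append]
    rw [hmain]

lemma key (n : ℕ) : ∀ (H F G : List (Finset α)), H.length ≤ n →
    H.Pairwise (fun A B => A ∩ B = ∅) →
    (∀ B ∈ F, B ≠ ∅) → (∀ B ∈ G, B ≠ ∅) →
    Refines F H → Refines G H → tits F G = tits G F := by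
  induction n with
  | zero =>
    intro H F G hlen _ hF _ rF _
    have hH : H = [] := List.length_eq_zero_iff.mp (Nat.le_zero.mp hlen)
    cases F with
    | nil => rw [tits_nil, tits_nil_right]
    | cons S F' =>
      exfalso
      obtain ⟨Hs, hFa, hHeq⟩ := rF
      obtain ⟨g, Hs', hSg, _, rfl⟩ := List.forall₂_cons_left_iff.mp hFa
      rw [hH, List.flatten_cons] at hHeq
      have hg : g = [] := (List.append_eq_nil_iff.mp hHeq.symm).1
      have hS0 : S = ∅ := by rw [← hSg.2.2, hg]; rfl
      exact hF S (by simp) hS0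
  | succ n ih =>
    intro H F G hlen hpw hF hG rF rG
    cases F with
    | nil => rw [tits_nil, tits_nil_right]
    | cons S F' =>
      cases G with
      | nil => rw [tits_nil, tits_nil_right]
      | cons T G' =>
        obtain ⟨Hs, hFa, hHeq⟩ := rF
        obtain ⟨Ks, hGa, hHeq2⟩ := rG
        obtain ⟨hs, Hs', hhs, hFs, rfl⟩ := List.forall₂_cons_left_iff.mp hFa
        obtain ⟨ks, Ks', hks, hGs, rfl⟩ := List.forall₂_cons_left_iff.mp hGa
        rw [List.flatten_cons] at hHeq hHeq2
        rcases le_total hs.length ks.length with h | h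
        · exact keyStep ih H S T F' G' hlen hpw hF hG hs ks Hs' Ks' hhs hks hFs hGs hHeq
            hHeq2 h
        · exact (keyStep ih H T S G' F' hlen hpw hG hF ks hs Ks' Hs' hks hhs hGs hFs hHeq2
            hHeq h).symm


lemma chunk_isComposition {I S : Finset α} {G : List (Finset α)} (hS : S ⊆ I)
    (hG : IsComposition I G) : IsComposition S (chunk S G) := by
  obtain ⟨hne, hpw, hU⟩ := hG
  refine ⟨?_, ?_, ?_⟩
  · intro B hB
    simp only [chunk, List.mem_filter, decide_eq_true_eq] at hB
    exact hB.2
  · apply List.Pairwise.filter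
    apply hpw.map
    intro T T' hTT'
    exact inter_empty_of_subsets Finset.inter_subset_right Finset.inter_subset_right hTT'
  · show unionL (chunk S G) = S
    ext a
    rw [mem_unionL]
    constructor
    · rintro ⟨B, hB, haB⟩
      simp only [chunk, List.mem_filter, List.mem_map, decide_eq_true_eq] at hB
      obtain ⟨⟨T, hT, rfl⟩, _⟩ := hB
      exact (Finset.mem_inter.mp haB).1
    · intro haS
      have haI : a ∈ I := hS haS
      rw [← hU] at haI
      obtain ⟨T, hT, haT⟩ := mem_unionL.mp haI
      refine ⟨S ∩ T, ?_, Finset.mem_inter.mpr ⟨haS, haT⟩⟩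
      simp only [chunk, List.mem_filter, List.mem_map, decide_eq_true_eq]
      exact ⟨⟨T, hT, rfl⟩, Finset.ne_empty_of_mem (Finset.mem_inter.mpr ⟨haS, haT⟩)⟩

lemma refines_tits_left {I : Finset α} {F G : List (Finset α)}
    (hF : IsComposition I F) (hG : IsComposition I G) : Refines F (tits F G) := by
  refine ⟨F.map fun S => chunk S G, ?_, tits_eq F G⟩
  rw [List.forall₂_map_right_iff]
  rw [List.forall₂_same]
  intro S hS
  apply chunk_isComposition _ hG
  rw [← hF.2.2]
  exact subset_unionL hS

lemma isComposition_flatten : ∀ {F : List (Finset α)} {Gs : List (List (Finset α))},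
    List.Forall₂ (fun B g => IsComposition B g) F Gs →
    ∀ {I : Finset α}, IsComposition I F → IsComposition I Gs.flatten := by
  intro F Gs h
  induction h with
  | nil =>
    intro I hI
    have hI0 : I = ∅ := by rw [← hI.2.2]; rfl
    subst hI0
    exact ⟨by simp, by simp, rfl⟩
  | @cons S g F' Gs' hSg h ih =>
    intro I hI
    obtain ⟨hne, hpw, hU⟩ := hI
    have hpw' := List.pairwise_cons.mp hpw
    have hF' : IsComposition (unionL F') F' := ⟨fun B hB => hne B (by simp [hB]), hpw'.2, rfl⟩
    have hflat := ih hF'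
    have hIeq : I = S ∪ unionL F' := by rw [← hU]; rfl
    subst hIeq
    obtain ⟨hne1, hpw1, hU1⟩ := hSg
    obtain ⟨hne2, hpw2, hU2⟩ := hflat
    refine ⟨?_, ?_, ?_⟩
    · intro B hB
      rw [List.flatten_cons, List.mem_append] at hB
      rcases hB with hB | hB
      · exact hne1 B hB
      · exact hne2 B hB
    · rw [List.flatten_cons, List.pairwise_append]
      refine ⟨hpw1, hpw2, ?_⟩
      intro A hA B hB
      have hAS : A ⊆ S := by rw [← hU1]; exact subset_unionL hA
      have hBF : B ⊆ unionL F' := by rw [← hU2]; exact subset_unionL hB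
      have hdisj : S ∩ unionL F' = ∅ := by
        rw [Finset.eq_empty_iff_forall_notMem]
        intro a ha
        obtain ⟨haS, haU⟩ := Finset.mem_inter.mp ha
        obtain ⟨B', hB', haB'⟩ := mem_unionL.mp haU
        have hd := hpw'.1 B' hB'
        have hm : a ∈ S ∩ B' := Finset.mem_inter.mpr ⟨haS, haB'⟩
        rw [hd] at hm
        simp at hm
      exact inter_empty_of_subsets hAS hBF hdisj
    · rw [List.flatten_cons]
      show unionL (g ++ Gs'.flatten) = _
      rw [unionL_append]
      show unionL g ∪ unionL Gs'.flatten = _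
      rw [show unionL g = S from hU1, show unionL Gs'.flatten = unionL F' from hU2]

lemma tits_isComposition {I : Finset α} {F G : List (Finset α)}
    (hF : IsComposition I F) (hG : IsComposition I G) : IsComposition I (tits F G) := by
  obtain ⟨Gs, h1, h2⟩ := refines_tits_left hF hG
  rw [h2]
  exact isComposition_flatten h1 hF

end TitsProof

/-- `FG = GF` if and only if `F` and `G` admit a common refinement. -/
theorem tits_comm_iff_common_refinement {α : Type*} [DecidableEq α] (I : Finset α)
    (F G : List (Finset α)) (hF : IsComposition I F) (hG : IsComposition I G) :
    tits F G = tits G F ↔ ∃ H, IsComposition I H ∧ Refines F H ∧ Refines G H := by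
  constructor
  · intro h
    exact ⟨tits F G, TitsProof.tits_isComposition hF hG, TitsProof.refines_tits_left hF hG,
      by rw [h]; exact TitsProof.refines_tits_left hG hF⟩
  · rintro ⟨H, hH, rF, rG⟩
    exact TitsProof.key H.length H F G le_rfl hH.2.1 hF.1 hG.1 rF rG
end

section
/- The support map turns the Tits product into the join: for set compositions F and G of a finite set I, supp(FG) = supp(F) ∨ supp(G) in the lattice of partitions of I. -/
/-- `X` is a partition of the finite set `I`: an (unordered) collection of pairwise
disjoint nonempty subsets whose union is `I`. -/
def IsPartition {α : Type*} [DecidableEq α] (I : Finset α) (X : Finset (Finset α)) : Prop :=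
  (∀ B ∈ X, B ≠ ∅) ∧ (∀ B ∈ X, ∀ C ∈ X, B ≠ C → B ∩ C = ∅) ∧ X.sup id = I

/-- The partial order on partitions: `X ≤ Y` if every block of `X` is a union of
blocks of `Y` (so `X` is coarser than `Y`). -/
def PartLE {α : Type*} [DecidableEq α] (X Y : Finset (Finset α)) : Prop :=
  ∀ B ∈ X, ∃ S ∈ Y.powerset, S.sup id = B

/-! The blocks of `FG` are the nonempty intersections `S ∩ T` of a block of `F` with a block
of `G`. Since the blocks of `G` cover `I`, each block `S` of `F` is the union of its traces
`S ∩ T`, and symmetrically for `G`. Conversely, if `S` and `T` are unions of blocks of a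
partition `Z`, then, the blocks of `Z` being disjoint, `S ∩ T` is the union of the blocks of
`Z` common to both. -/

section

variable {α : Type*} [DecidableEq α]

theorem List.foldr_union_eq_sup_toFinset (L : List (Finset α)) :
    L.foldr (· ∪ ·) ∅ = L.toFinset.sup id := by
  induction L with
  | nil => rfl
  | cons B L ih => simp [ih]

theorem IsComposition.sup_toFinset {I : Finset α} {F : List (Finset α)}
    (hF : IsComposition I F) : F.toFinset.sup id = I := by
  rw [← hF.2.2, List.foldr_union_eq_sup_toFinset]

theorem IsComposition.subset {I : Finset α} {F : List (Finset α)} (hF : IsComposition I F)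
    {B : Finset α} (hB : B ∈ F) : B ⊆ I :=
  hF.sup_toFinset ▸ Finset.le_sup (f := id) (List.mem_toFinset.mpr hB)

theorem mem_tits {F G : List (Finset α)} {X : Finset α} :
    X ∈ tits F G ↔ ∃ S ∈ F, ∃ T ∈ G, S ∩ T = X ∧ X ≠ ∅ := by
  simp only [tits, List.mem_flatten, List.mem_map]
  constructor
  · rintro ⟨l, ⟨S, hS, rfl⟩, hX⟩
    obtain ⟨hX, hne⟩ := List.mem_filter.mp hX
    obtain ⟨T, hT, rfl⟩ := List.mem_map.mp hX
    exact ⟨S, hS, T, hT, rfl, of_decide_eq_true hne⟩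
  · rintro ⟨S, hS, T, hT, rfl, hne⟩
    exact ⟨_, ⟨S, hS, rfl⟩,
      List.mem_filter.mpr ⟨List.mem_map_of_mem hT, decide_eq_true hne⟩⟩

theorem exists_subset_sup_eq_of_subset_sup {B : Finset α} {C Y : Finset (Finset α)}
    (hB : B ⊆ C.sup id) (hY : ∀ T ∈ C, B ∩ T ≠ ∅ → B ∩ T ∈ Y) :
    ∃ S ∈ Y.powerset, S.sup id = B := by
  refine ⟨(C.image (B ∩ ·)).erase ∅, Finset.mem_powerset.mpr fun X hX => ?_, ?_⟩
  · obtain ⟨hne, hX⟩ := Finset.mem_erase.mp hX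
    obtain ⟨T, hT, rfl⟩ := Finset.mem_image.mp hX
    exact hY T hT hne
  · rw [← Finset.bot_eq_empty, Finset.sup_erase_bot, Finset.sup_image, Function.id_comp]
    exact (Finset.sup_inf_distrib_left C id B).symm.trans (inf_eq_left.mpr hB)

theorem inter_sup_eq_sup_inter_of_pairwise_disjoint {Z P Q : Finset (Finset α)}
    (hZ : ∀ B ∈ Z, ∀ C ∈ Z, B ≠ C → B ∩ C = ∅) (hP : P ⊆ Z) (hQ : Q ⊆ Z) :
    P.sup id ∩ Q.sup id = (P ∩ Q).sup id := by
  ext x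
  simp only [Finset.mem_inter, Finset.mem_sup, id]
  constructor
  · rintro ⟨⟨D, hD, hxD⟩, ⟨D', hD', hxD'⟩⟩
    obtain rfl : D = D' := by
      by_contra hne
      have hempty := hZ D (hP hD) D' (hQ hD') hne
      exact Finset.notMem_empty x (hempty ▸ Finset.mem_inter.mpr ⟨hxD, hxD'⟩)
    exact ⟨D, ⟨hD, hD'⟩, hxD⟩
  · rintro ⟨D, ⟨hD, hD'⟩, hxD⟩
    exact ⟨⟨D, hD, hxD⟩, ⟨D, hD', hxD⟩⟩

end

/-- The support of a composition `F` is the partition `supp F` of `I` obtained by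
forgetting the order of the blocks; here realized as `F.toFinset`. The support of the
Tits product `FG` is the join `supp F ∨ supp G` in the lattice of partitions of `I`,
i.e. the least upper bound of `supp F` and `supp G`. -/
theorem supp_tits_eq_join {α : Type*} [DecidableEq α] (I : Finset α)
    (F G : List (Finset α)) (hF : IsComposition I F) (hG : IsComposition I G) :
    PartLE F.toFinset (tits F G).toFinset ∧ PartLE G.toFinset (tits F G).toFinset ∧
      ∀ Z : Finset (Finset α), IsPartition I Z →
        PartLE F.toFinset Z → PartLE G.toFinset Z → PartLE (tits F G).toFinset Z := by
  refine ⟨fun S hS => ?_, fun T hT => ?_, fun Z hZ hFZ hGZ X hX => ?_⟩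
  · rw [List.mem_toFinset] at hS
    refine exists_subset_sup_eq_of_subset_sup (hG.sup_toFinset ▸ hF.subset hS) fun T hT hne => ?_
    exact List.mem_toFinset.mpr (mem_tits.mpr ⟨S, hS, T, List.mem_toFinset.mp hT, rfl, hne⟩)
  · rw [List.mem_toFinset] at hT
    refine exists_subset_sup_eq_of_subset_sup (hF.sup_toFinset ▸ hG.subset hT) fun S hS hne => ?_
    rw [Finset.inter_comm] at hne ⊢
    exact List.mem_toFinset.mpr (mem_tits.mpr ⟨S, List.mem_toFinset.mp hS, T, hT, rfl, hne⟩)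
  · obtain ⟨S, hS, T, hT, rfl, -⟩ := mem_tits.mp (List.mem_toFinset.mp hX)
    obtain ⟨P, hP, rfl⟩ := hFZ S (List.mem_toFinset.mpr hS)
    obtain ⟨Q, hQ, rfl⟩ := hGZ T (List.mem_toFinset.mpr hT)
    rw [Finset.mem_powerset] at hP hQ
    exact ⟨P ∩ Q, Finset.mem_powerset.mpr (Finset.inter_subset_left.trans hP),
      (inter_sup_eq_sup_inter_of_pairwise_disjoint hZ.2.1 hP hQ).symm⟩
end

section
/- The Schubert statistic of a concatenation satisfies: if I = S_1 ⊔ S_2 = T_1 ⊔ T_2, ℓ_1 is a linear order on S_1 and ℓ_2 is a linear order on S_2, and A = S_1∩T_1, B = S_1∩T_2, C = S_2∩T_1, D = S_2∩T_2, then schub_{T_1,T_2}(ℓ_1 · ℓ_2) = schub_{A,B}(ℓ_1) + schub_{C,D}(ℓ_2) + |B||C|. -/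
/-- The Schubert statistic: for a linear order `ℓ` (a list) and disjoint sets `S`, `T`,
`schub S T ℓ` counts pairs `(i, j) ∈ S × T` with `i` strictly later than `j` in `ℓ`. -/
def schub {α : Type*} [DecidableEq α] (S T : Finset α) (ℓ : List α) : ℕ :=
  ((S ×ˢ T).filter fun p => ℓ.idxOf p.2 < ℓ.idxOf p.1).card

/-!
Split `T₁ = A ⊔ C` and `T₂ = B ⊔ D`; `schub` is additive in each of its two sets, so
`schub_{T₁,T₂}` is the sum of four terms. In `ℓ₁ ++ ℓ₂` an element of `S₁` keeps its position
in `ℓ₁` and an element of `S₂` has its position in `ℓ₂` shifted by `|ℓ₁|`. Hence the pairs in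
`A × B` and `C × D` are counted as in `ℓ₁` and `ℓ₂`, every pair in `C × B` is counted, and
no pair in `A × D` is.
-/

open Finset

section Schub

variable {α : Type*} [DecidableEq α]

theorem schub_union_left {S S' : Finset α} (h : Disjoint S S') (T : Finset α) (ℓ : List α) :
    schub (S ∪ S') T ℓ = schub S T ℓ + schub S' T ℓ := by
  rw [schub, union_product, filter_union, card_union_of_disjoint
    (disjoint_filter_filter (disjoint_product.mpr (Or.inl h)))]
  rfl

theorem schub_union_right (S : Finset α) {T T' : Finset α} (h : Disjoint T T') (ℓ : List α) :
    schub S (T ∪ T') ℓ = schub S T ℓ + schub S T' ℓ := by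
  rw [schub, product_union, filter_union, card_union_of_disjoint
    (disjoint_filter_filter (disjoint_product.mpr (Or.inr h)))]
  rfl

theorem schub_congr {S T : Finset α} {ℓ ℓ' : List α}
    (h : ∀ i ∈ S, ∀ j ∈ T, (ℓ.idxOf j < ℓ.idxOf i ↔ ℓ'.idxOf j < ℓ'.idxOf i)) :
    schub S T ℓ = schub S T ℓ' := by
  refine congrArg card (filter_congr fun p hp => ?_)
  rw [mem_product] at hp
  exact h _ hp.1 _ hp.2

theorem schub_eq_card_mul {S T : Finset α} {ℓ : List α}
    (h : ∀ i ∈ S, ∀ j ∈ T, ℓ.idxOf j < ℓ.idxOf i) : schub S T ℓ = S.card * T.card := by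
  rw [schub, filter_true_of_mem fun p hp => ?_, card_product]
  rw [mem_product] at hp
  exact h _ hp.1 _ hp.2

theorem schub_eq_zero {S T : Finset α} {ℓ : List α}
    (h : ∀ i ∈ S, ∀ j ∈ T, ℓ.idxOf i ≤ ℓ.idxOf j) : schub S T ℓ = 0 := by
  rw [schub, card_eq_zero, filter_eq_empty_iff]
  intro p hp
  rw [mem_product] at hp
  exact (h _ hp.1 _ hp.2).not_gt

end Schub

section Append

variable {α : Type*} [DecidableEq α] {S T : Finset α} {ℓ₁ ℓ₂ : List α}

theorem List.idxOf_append_lt_of_mem_of_notMem {x y : α} (hx : x ∈ ℓ₁) (hy : y ∉ ℓ₁) :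
    (ℓ₁ ++ ℓ₂).idxOf x < (ℓ₁ ++ ℓ₂).idxOf y := by
  rw [List.idxOf_append_of_mem hx, List.idxOf_append_of_notMem hy]
  exact (List.idxOf_lt_length_iff.mpr hx).trans_le (Nat.le_add_right _ _)

theorem schub_append_of_subset (hS : S ⊆ ℓ₁.toFinset) (hT : T ⊆ ℓ₁.toFinset) :
    schub S T (ℓ₁ ++ ℓ₂) = schub S T ℓ₁ :=
  schub_congr fun i hi j hj => by
    rw [List.idxOf_append_of_mem (List.mem_toFinset.mp (hS hi)),
      List.idxOf_append_of_mem (List.mem_toFinset.mp (hT hj))]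

theorem schub_append_of_disjoint (hS : Disjoint S ℓ₁.toFinset) (hT : Disjoint T ℓ₁.toFinset) :
    schub S T (ℓ₁ ++ ℓ₂) = schub S T ℓ₂ :=
  schub_congr fun i hi j hj => by
    rw [List.idxOf_append_of_notMem (List.mem_toFinset.not.mp (disjoint_left.mp hS hi)),
      List.idxOf_append_of_notMem (List.mem_toFinset.not.mp (disjoint_left.mp hT hj)),
      Nat.add_lt_add_iff_left]

theorem schub_append_of_disjoint_of_subset (hS : Disjoint S ℓ₁.toFinset)
    (hT : T ⊆ ℓ₁.toFinset) : schub S T (ℓ₁ ++ ℓ₂) = S.card * T.card :=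
  schub_eq_card_mul fun _ hi _ hj => List.idxOf_append_lt_of_mem_of_notMem
    (List.mem_toFinset.mp (hT hj)) (List.mem_toFinset.not.mp (disjoint_left.mp hS hi))

theorem schub_append_of_subset_of_disjoint (hS : S ⊆ ℓ₁.toFinset)
    (hT : Disjoint T ℓ₁.toFinset) : schub S T (ℓ₁ ++ ℓ₂) = 0 :=
  schub_eq_zero fun _ hi _ hj => (List.idxOf_append_lt_of_mem_of_notMem
    (List.mem_toFinset.mp (hS hi)) (List.mem_toFinset.not.mp (disjoint_left.mp hT hj))).le

end Append

theorem schub_concat_general {α : Type*} [DecidableEq α] (S₁ S₂ T₁ T₂ : Finset α)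
    (hS : S₁ ∩ S₂ = ∅) (hTS : T₁ ∪ T₂ = S₁ ∪ S₂)
    (ℓ₁ ℓ₂ : List α) (hto₁ : ℓ₁.toFinset = S₁) :
    schub T₁ T₂ (ℓ₁ ++ ℓ₂) =
      schub (S₁ ∩ T₁) (S₁ ∩ T₂) ℓ₁ + schub (S₂ ∩ T₁) (S₂ ∩ T₂) ℓ₂ +
        (S₁ ∩ T₂).card * (S₂ ∩ T₁).card := by
  subst hto₁
  have hd : Disjoint ℓ₁.toFinset S₂ := disjoint_iff_inter_eq_empty.mpr hS
  have hd₂ (T : Finset α) : Disjoint (S₂ ∩ T) ℓ₁.toFinset := (hd.mono_right inter_subset_left).symm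
  have hsplit (T : Finset α) (hT : T ⊆ ℓ₁.toFinset ∪ S₂) : ℓ₁.toFinset ∩ T ∪ S₂ ∩ T = T := by
    rw [← union_inter_distrib_right, inter_eq_right.mpr hT]
  have hdisj (T : Finset α) : Disjoint (ℓ₁.toFinset ∩ T) (S₂ ∩ T) :=
    hd.mono inter_subset_left inter_subset_left
  calc schub T₁ T₂ (ℓ₁ ++ ℓ₂)
      = schub (ℓ₁.toFinset ∩ T₁ ∪ S₂ ∩ T₁) (ℓ₁.toFinset ∩ T₂ ∪ S₂ ∩ T₂) (ℓ₁ ++ ℓ₂) := by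
        rw [hsplit T₁ (hTS ▸ subset_union_left), hsplit T₂ (hTS ▸ subset_union_right)]
    _ = schub (ℓ₁.toFinset ∩ T₁) (ℓ₁.toFinset ∩ T₂) ℓ₁ + 0
          + ((S₂ ∩ T₁).card * (ℓ₁.toFinset ∩ T₂).card + schub (S₂ ∩ T₁) (S₂ ∩ T₂) ℓ₂) := by
        rw [schub_union_left (hdisj T₁), schub_union_right _ (hdisj T₂),
          schub_union_right _ (hdisj T₂), schub_append_of_subset inter_subset_left inter_subset_left,
          schub_append_of_subset_of_disjoint inter_subset_left (hd₂ T₂),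
          schub_append_of_disjoint_of_subset (hd₂ T₁) inter_subset_left,
          schub_append_of_disjoint (hd₂ T₁) (hd₂ T₂)]
    _ = _ := by ring

/-- Schubert statistic of a concatenation: with `I = S₁ ⊔ S₂ = T₁ ⊔ T₂`, a linear
order `ℓ₁` on `S₁` and `ℓ₂` on `S₂`, and `A = S₁∩T₁`, `B = S₁∩T₂`, `C = S₂∩T₁`,
`D = S₂∩T₂`, one has
`schub_{T₁,T₂}(ℓ₁·ℓ₂) = schub_{A,B}(ℓ₁) + schub_{C,D}(ℓ₂) + |B||C|`. -/
theorem schub_concat {α : Type*} [DecidableEq α] (S₁ S₂ T₁ T₂ : Finset α)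
    (hS : S₁ ∩ S₂ = ∅) (hT : T₁ ∩ T₂ = ∅) (hTS : T₁ ∪ T₂ = S₁ ∪ S₂)
    (ℓ₁ ℓ₂ : List α) (hnd₁ : ℓ₁.Nodup) (hnd₂ : ℓ₂.Nodup)
    (hto₁ : ℓ₁.toFinset = S₁) (hto₂ : ℓ₂.toFinset = S₂) :
    schub T₁ T₂ (ℓ₁ ++ ℓ₂) =
      schub (S₁ ∩ T₁) (S₁ ∩ T₂) ℓ₁ + schub (S₂ ∩ T₁) (S₂ ∩ T₂) ℓ₂ +
        (S₁ ∩ T₂).card * (S₂ ∩ T₁).card :=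
  schub_concat_general S₁ S₂ T₁ T₂ hS hTS ℓ₁ ℓ₂ hto₁
end

section
/- The Möbius function of an interval in the partition lattice of a finite set I is given by: for partitions X ≤ Y of I, μ(X,Y) = (-1)^{ℓ(Y)-ℓ(X)} ∏_{B ∈ X} (n_B − 1)!, where n_B is the number of blocks of Y contained in the block B of X. In particular μ({I}, X) = (-1)^{ℓ(X)-1}(ℓ(X)−1)!. -/
instance {α : Type*} [DecidableEq α] (I : Finset α) :
    DecidablePred (IsPartition I) := fun _ => by
  unfold IsPartition; infer_instance

instance {α : Type*} [DecidableEq α] (X Y : Finset (Finset α)) :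
    Decidable (PartLE X Y) := by
  unfold PartLE; infer_instance

/-!
The product formula is the only solution of the recursion defining `m`, so it suffices to check
that it satisfies the recursion. Splitting off one block `B` of `X` factors the interval `[X, Y]`
as `[{B}, Y|_B] × [X ∖ {B}, Y ∖ Y|_B]`, and `[{B}, Y|_B]` is the full partition lattice of the
set of blocks of `Y` inside `B`. This reduces everything to
`∑_π (-1)^{|π|-1} (|π|-1)! = δ_{n,1}` over the partitions `π` of an `n`-set, which follows,
by splitting off the block of a fixed point, from the signed count
`∑_π (-1)^{|π|} |π|! = (-1)^n` of ordered set partitions.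
-/

open Finset
open scoped Nat

namespace IsPartition

variable {α : Type*} [DecidableEq α] {V W : Finset α} {X Y S : Finset (Finset α)}
  {B C : Finset α}

theorem nonempty (h : IsPartition V X) (hB : B ∈ X) : B.Nonempty :=
  nonempty_iff_ne_empty.2 (h.1 B hB)

theorem subset (h : IsPartition V X) (hB : B ∈ X) : B ⊆ V := by
  rw [← h.2.2]; exact le_sup (f := id) hB

theorem disjoint (h : IsPartition V X) (hB : B ∈ X) (hC : C ∈ X) (hBC : B ≠ C) :
    Disjoint B C :=
  disjoint_iff_inter_eq_empty.2 (h.2.1 B hB C hC hBC)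

theorem exists_mem (h : IsPartition V X) {x : α} (hx : x ∈ V) : ∃ B ∈ X, x ∈ B := by
  rw [← h.2.2] at hx; simpa using hx

theorem eq_of_mem_of_mem (h : IsPartition V X) (hB : B ∈ X) (hC : C ∈ X) {x : α}
    (hxB : x ∈ B) (hxC : x ∈ C) : B = C := by
  by_contra hBC
  exact disjoint_left.1 (h.disjoint hB hC hBC) hxB hxC

theorem eq_of_subset_of_subset (h : IsPartition V X) (hB : B ∈ X) (hC : C ∈ X) {D : Finset α}
    (hD : D.Nonempty) (hDB : D ⊆ B) (hDC : D ⊆ C) : B = C :=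
  h.eq_of_mem_of_mem hB hC (hDB hD.choose_spec) (hDC hD.choose_spec)

theorem mem_powerset_powerset (h : IsPartition V X) : X ∈ V.powerset.powerset :=
  mem_powerset.2 fun _ hB => mem_powerset.2 (h.subset hB)

theorem eq_empty (h : IsPartition ∅ X) : X = ∅ :=
  eq_empty_iff_forall_notMem.2 fun _ hB => (h.nonempty hB).ne_empty (subset_empty.1 (h.subset hB))

theorem empty : IsPartition (∅ : Finset α) ∅ := by
  simp [IsPartition]

theorem singleton (hV : V.Nonempty) : IsPartition V {V} := by
  simp [IsPartition, hV.ne_empty]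

theorem union (hX : IsPartition V X) (hY : IsPartition W Y) (hVW : Disjoint V W) :
    IsPartition (V ∪ W) (X ∪ Y) := by
  have cross : ∀ B ∈ X, ∀ C ∈ Y, B ∩ C = ∅ := fun B hB C hC =>
    disjoint_iff_inter_eq_empty.1 (hVW.mono (hX.subset hB) (hY.subset hC))
  refine ⟨?_, ?_, by rw [sup_union, hX.2.2, hY.2.2]; rfl⟩
  · simp only [mem_union]
    rintro B (hB | hB)
    exacts [hX.1 B hB, hY.1 B hB]
  · simp only [mem_union]
    rintro B (hB | hB) C (hC | hC) hBC
    · exact hX.2.1 B hB C hC hBC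
    · exact cross B hB C hC
    · rw [inter_comm]; exact cross C hC B hB
    · exact hY.2.1 B hB C hC hBC

theorem of_subset (h : IsPartition V X) (hS : S ⊆ X) : IsPartition (S.sup id) S :=
  ⟨fun B hB => h.1 B (hS hB), fun B hB C hC => h.2.1 B (hS hB) C (hS hC), rfl⟩

theorem sdiff (h : IsPartition V X) (hS : S ⊆ X) : IsPartition (V \ S.sup id) (X \ S) := by
  refine ⟨fun B hB => h.1 B (mem_sdiff.1 hB).1,
    fun B hB C hC => h.2.1 B (mem_sdiff.1 hB).1 C (mem_sdiff.1 hC).1, ?_⟩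
  ext x
  simp only [mem_sup, mem_sdiff, id]
  constructor
  · rintro ⟨B, ⟨hB, hBS⟩, hxB⟩
    refine ⟨h.subset hB hxB, fun ⟨C, hCS, hxC⟩ => hBS ?_⟩
    rwa [h.eq_of_mem_of_mem hB (hS hCS) hxB hxC]
  · rintro ⟨hxV, hxS⟩
    obtain ⟨B, hB, hxB⟩ := h.exists_mem hxV
    exact ⟨B, ⟨hB, fun hBS => hxS ⟨B, hBS, hxB⟩⟩, hxB⟩

theorem erase (h : IsPartition V X) (hB : B ∈ X) : IsPartition (V \ B) (X.erase B) := by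
  simpa [sdiff_singleton_eq_erase] using h.sdiff (singleton_subset_iff.2 hB)

theorem eq_of_subset (hX : IsPartition V X) (hY : IsPartition V Y) (hXY : X ⊆ Y) : X = Y := by
  refine hXY.antisymm fun C hC => ?_
  obtain ⟨x, hx⟩ := hY.nonempty hC
  obtain ⟨B, hB, hxB⟩ := hX.exists_mem (hY.subset hC hx)
  rwa [hY.eq_of_mem_of_mem hC (hXY hB) hx hxB]

end IsPartition

namespace PartitionLattice

variable {α : Type*}

def Refines (Y X : Finset (Finset α)) : Prop :=
  ∀ C ∈ Y, ∃ B ∈ X, C ⊆ B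

theorem refines_refl (X : Finset (Finset α)) : Refines X X :=
  fun C hC => ⟨C, hC, subset_rfl⟩

theorem Refines.trans {X Y Z : Finset (Finset α)} (hZY : Refines Z Y) (hYX : Refines Y X) :
    Refines Z X := fun C hC => by
  obtain ⟨D, hD, hCD⟩ := hZY C hC
  obtain ⟨B, hB, hDB⟩ := hYX D hD
  exact ⟨B, hB, hCD.trans hDB⟩

variable [DecidableEq α]

def blocksIn (Y : Finset (Finset α)) (B : Finset α) : Finset (Finset α) :=
  Y.filter (· ⊆ B)

def interval (V : Finset α) (X Y : Finset (Finset α)) : Finset (Finset (Finset α)) :=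
  V.powerset.powerset.filter fun Z => IsPartition V Z ∧ PartLE X Z ∧ PartLE Z Y

section Refinement

variable {V : Finset α} {X Y Z S : Finset (Finset α)} {B : Finset α}

theorem blocksIn_subset (Y : Finset (Finset α)) (B : Finset α) : blocksIn Y B ⊆ Y :=
  filter_subset _ _

theorem mem_blocksIn {C : Finset α} : C ∈ blocksIn Y B ↔ C ∈ Y ∧ C ⊆ B :=
  mem_filter

theorem _root_.IsPartition.blocksIn_sup (hY : IsPartition V Y) (hS : S ⊆ Y) :
    blocksIn Y (S.sup id) = S := by
  ext C
  rw [mem_blocksIn]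
  refine ⟨fun ⟨hC, hCS⟩ => ?_, fun hC => ⟨hS hC, le_sup (f := id) hC⟩⟩
  obtain ⟨x, hx⟩ := hY.nonempty hC
  obtain ⟨D, hD, hxD⟩ := mem_sup.1 (hCS hx)
  rwa [hY.eq_of_mem_of_mem hC (hS hD) hx hxD]

theorem sup_blocksIn (hX : IsPartition V X) (hY : IsPartition V Y) (hXY : Refines Y X)
    (hB : B ∈ X) : (blocksIn Y B).sup id = B := by
  refine (Finset.sup_le fun C hC => (mem_blocksIn.1 hC).2).antisymm fun x hxB => ?_
  obtain ⟨C, hC, hxC⟩ := hY.exists_mem (hX.subset hB hxB)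
  obtain ⟨B', hB', hCB'⟩ := hXY C hC
  rw [hX.eq_of_mem_of_mem hB hB' hxB (hCB' hxC)]
  exact mem_sup.2 ⟨C, mem_blocksIn.2 ⟨hC, hCB'⟩, hxC⟩

theorem partLE_iff_refines (hX : IsPartition V X) (hY : IsPartition V Y) :
    PartLE X Y ↔ Refines Y X := by
  refine ⟨fun hXY C hC => ?_, fun hXY B hB =>
    ⟨blocksIn Y B, mem_powerset.2 (blocksIn_subset Y B), sup_blocksIn hX hY hXY hB⟩⟩
  obtain ⟨x, hx⟩ := hY.nonempty hC
  obtain ⟨B, hB, hxB⟩ := hX.exists_mem (hY.subset hC hx)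
  obtain ⟨S, hS, rfl⟩ := hXY B hB
  refine ⟨_, hB, ?_⟩
  rw [← hY.blocksIn_sup (mem_powerset.1 hS)] at hxB ⊢
  obtain ⟨C', hC', hxC'⟩ := mem_sup.1 hxB
  rw [hY.eq_of_mem_of_mem hC (mem_blocksIn.1 hC').1 hx hxC']
  exact le_sup (f := id) hC'

theorem mem_interval (hX : IsPartition V X) (hY : IsPartition V Y) :
    Z ∈ interval V X Y ↔ IsPartition V Z ∧ Refines Z X ∧ Refines Y Z := by
  rw [interval, mem_filter]
  constructor
  · rintro ⟨-, hZ, hXZ, hZY⟩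
    exact ⟨hZ, (partLE_iff_refines hX hZ).1 hXZ, (partLE_iff_refines hZ hY).1 hZY⟩
  · rintro ⟨hZ, hXZ, hZY⟩
    exact ⟨hZ.mem_powerset_powerset, hZ, (partLE_iff_refines hX hZ).2 hXZ,
      (partLE_iff_refines hZ hY).2 hZY⟩

end Refinement

section Counting

variable {V : Finset α} {X Y : Finset (Finset α)}

theorem blocksIn_nonempty (hX : IsPartition V X) (hY : IsPartition V Y) (hXY : Refines Y X)
    {B : Finset α} (hB : B ∈ X) : (blocksIn Y B).Nonempty := by
  refine nonempty_iff_ne_empty.2 fun h => (hX.nonempty hB).ne_empty ?_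
  rw [← sup_blocksIn hX hY hXY hB, h, sup_empty]
  rfl

theorem card_eq_sum_card_blocksIn (hX : IsPartition V X) (hY : IsPartition V Y)
    (hXY : Refines Y X) : Y.card = ∑ B ∈ X, (blocksIn Y B).card := by
  have hunion : X.biUnion (blocksIn Y) = Y := by
    ext C
    simp only [mem_biUnion, mem_blocksIn]
    refine ⟨fun ⟨_, _, hC, _⟩ => hC, fun hC => ?_⟩
    obtain ⟨B, hB, hCB⟩ := hXY C hC
    exact ⟨B, hB, hC, hCB⟩
  rw [← card_biUnion, hunion]
  intro B hB B' hB' hBB'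
  refine disjoint_left.2 fun C hC hC' => hBB' ?_
  rw [mem_blocksIn] at hC hC'
  exact hX.eq_of_subset_of_subset hB hB' (hY.nonempty hC.1) hC.2 hC'.2

theorem card_lt_card_of_refines (hX : IsPartition V X) (hY : IsPartition V Y)
    (hXY : Refines Y X) (hne : X ≠ Y) : X.card < Y.card := by
  obtain ⟨B, hB, hBY⟩ : ∃ B ∈ X, B ∉ Y :=
    not_subset.1 fun hsub => hne (hX.eq_of_subset hY hsub)
  rw [card_eq_sum_card_blocksIn hX hY hXY, card_eq_sum_ones]
  refine sum_lt_sum (fun B' hB' => card_pos.2 (blocksIn_nonempty hX hY hXY hB')) ⟨B, hB, ?_⟩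
  refine lt_of_le_of_ne (card_pos.2 (blocksIn_nonempty hX hY hXY hB)) fun h => hBY ?_
  obtain ⟨C, hC⟩ := card_eq_one.1 h.symm
  have hsup := sup_blocksIn hX hY hXY hB
  rw [hC, sup_singleton, id] at hsup
  exact hsup ▸ (mem_blocksIn.1 (hC ▸ mem_singleton_self C)).1

end Counting

theorem eq_of_sum_interval_eq {M : Type*} [AddCommGroup M] {V : Finset α}
    {m m' : Finset (Finset α) → Finset (Finset α) → M}
    (h : ∀ X Y, IsPartition V X → IsPartition V Y → PartLE X Y →
      ∑ Z ∈ interval V X Y, m X Z = ∑ Z ∈ interval V X Y, m' X Z)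
    {X Y : Finset (Finset α)} (hX : IsPartition V X) (hY : IsPartition V Y) (hXY : PartLE X Y) :
    m X Y = m' X Y := by
  induction hn : Y.card using Nat.strong_induction_on generalizing Y with | _ n ih =>
  have hYY : Y ∈ interval V X Y :=
    (mem_interval hX hY).2 ⟨hY, (partLE_iff_refines hX hY).1 hXY, refines_refl Y⟩
  have hrest :
      ∑ Z ∈ (interval V X Y).erase Y, m X Z = ∑ Z ∈ (interval V X Y).erase Y, m' X Z := by
    refine sum_congr rfl fun Z hZ => ?_
    obtain ⟨hZY, hZmem⟩ := mem_erase.1 hZ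
    obtain ⟨hZ, hXZ, hZY'⟩ := (mem_interval hX hY).1 hZmem
    exact ih _ (hn ▸ card_lt_card_of_refines hZ hY hZY' hZY) hZ
      ((partLE_iff_refines hX hZ).2 hXZ) rfl
  have htotal := h X Y hX hY hXY
  rw [← add_sum_erase _ _ hYY, ← add_sum_erase _ _ hYY, hrest] at htotal
  exact add_right_cancel htotal

section Split

variable {V : Finset α} {X Y Z : Finset (Finset α)} {B : Finset α}

theorem mem_sdiff_blocksIn {C : Finset α} : C ∈ Y \ blocksIn Y B ↔ C ∈ Y ∧ ¬ C ⊆ B := by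
  rw [mem_sdiff, mem_blocksIn]; tauto

theorem Refines.sdiff_blocksIn_erase (hYX : Refines Y X) :
    Refines (Y \ blocksIn Y B) (X.erase B) := fun C hC => by
  obtain ⟨hC, hCB⟩ := mem_sdiff_blocksIn.1 hC
  obtain ⟨B', hB', hCB'⟩ := hYX C hC
  exact ⟨B', mem_erase.2 ⟨fun h => hCB (h ▸ hCB'), hB'⟩, hCB'⟩

theorem isPartition_blocksIn (hX : IsPartition V X) (hY : IsPartition V Y) (hXY : Refines Y X)
    (hB : B ∈ X) : IsPartition B (blocksIn Y B) := by
  simpa only [sup_blocksIn hX hY hXY hB] using hY.of_subset (blocksIn_subset Y B)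

theorem isPartition_sdiff_blocksIn (hX : IsPartition V X) (hY : IsPartition V Y)
    (hXY : Refines Y X) (hB : B ∈ X) : IsPartition (V \ B) (Y \ blocksIn Y B) := by
  simpa only [sup_blocksIn hX hY hXY hB] using hY.sdiff (blocksIn_subset Y B)

theorem blocksIn_mem_interval (hX : IsPartition V X) (hY : IsPartition V Y) (hB : B ∈ X)
    (hZ : Z ∈ interval V X Y) : blocksIn Z B ∈ interval B {B} (blocksIn Y B) := by
  obtain ⟨hZ, hXZ, hZY⟩ := (mem_interval hX hY).1 hZ
  have hZB := isPartition_blocksIn hX hZ hXZ hB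
  refine (mem_interval (.singleton (hX.nonempty hB)) (isPartition_blocksIn hX hY
    (hZY.trans hXZ) hB)).2 ⟨hZB, fun D hD => ⟨B, mem_singleton_self B, hZB.subset hD⟩,
      fun C hC => ?_⟩
  obtain ⟨hC, hCB⟩ := mem_blocksIn.1 hC
  obtain ⟨D, hD, hCD⟩ := hZY C hC
  obtain ⟨B', hB', hDB'⟩ := hXZ D hD
  have hBB' := hX.eq_of_subset_of_subset hB hB' (hY.nonempty hC) hCB (hCD.trans hDB')
  exact ⟨D, mem_blocksIn.2 ⟨hD, hBB' ▸ hDB'⟩, hCD⟩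

theorem sdiff_blocksIn_mem_interval (hX : IsPartition V X) (hY : IsPartition V Y)
    (hB : B ∈ X) (hZ : Z ∈ interval V X Y) :
    Z \ blocksIn Z B ∈ interval (V \ B) (X.erase B) (Y \ blocksIn Y B) := by
  obtain ⟨hZ, hXZ, hZY⟩ := (mem_interval hX hY).1 hZ
  refine (mem_interval (hX.erase hB)
    (isPartition_sdiff_blocksIn hX hY (hZY.trans hXZ) hB)).2
    ⟨isPartition_sdiff_blocksIn hX hZ hXZ hB, hXZ.sdiff_blocksIn_erase, fun C hC => ?_⟩
  obtain ⟨hC, hCB⟩ := mem_sdiff_blocksIn.1 hC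
  obtain ⟨D, hD, hCD⟩ := hZY C hC
  exact ⟨D, mem_sdiff_blocksIn.2 ⟨hD, fun hDB => hCB (hCD.trans hDB)⟩, hCD⟩

theorem union_mem_interval (hX : IsPartition V X) (hY : IsPartition V Y) (hXY : Refines Y X)
    (hB : B ∈ X) {W Z' : Finset (Finset α)} (hW : W ∈ interval B {B} (blocksIn Y B))
    (hZ' : Z' ∈ interval (V \ B) (X.erase B) (Y \ blocksIn Y B)) :
    W ∪ Z' ∈ interval V X Y := by
  obtain ⟨hW, -, hYW⟩ := (mem_interval (.singleton (hX.nonempty hB))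
    (isPartition_blocksIn hX hY hXY hB)).1 hW
  obtain ⟨hZ', hZ'X, hYZ'⟩ := (mem_interval (hX.erase hB)
    (isPartition_sdiff_blocksIn hX hY hXY hB)).1 hZ'
  have hunion := hW.union hZ' disjoint_sdiff
  rw [union_sdiff_of_subset (hX.subset hB)] at hunion
  refine (mem_interval hX hY).2 ⟨hunion, fun D hD => ?_, fun C hC => ?_⟩
  · rcases mem_union.1 hD with hD | hD
    · exact ⟨B, hB, hW.subset hD⟩
    · obtain ⟨B', hB', hDB'⟩ := hZ'X D hD
      exact ⟨B', mem_of_mem_erase hB', hDB'⟩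
  · by_cases hCB : C ⊆ B
    · obtain ⟨D, hD, hCD⟩ := hYW C (mem_blocksIn.2 ⟨hC, hCB⟩)
      exact ⟨D, mem_union_left _ hD, hCD⟩
    · obtain ⟨D, hD, hCD⟩ := hYZ' C (mem_sdiff_blocksIn.2 ⟨hC, hCB⟩)
      exact ⟨D, mem_union_right _ hD, hCD⟩

theorem blocksIn_union_eq_and_disjoint {V : Finset α} {W Z' : Finset (Finset α)}
    (hW : IsPartition B W) (hZ' : IsPartition (V \ B) Z') :
    blocksIn (W ∪ Z') B = W ∧ Disjoint W Z' := by
  have hZ'B : ∀ D ∈ Z', ¬ D ⊆ B := fun D hD hDB => by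
    obtain ⟨x, hx⟩ := hZ'.nonempty hD
    exact (mem_sdiff.1 (hZ'.subset hD hx)).2 (hDB hx)
  refine ⟨?_, disjoint_left.2 fun D hDW hDZ' => hZ'B D hDZ' (hW.subset hDW)⟩
  ext D
  rw [mem_blocksIn, mem_union]
  refine ⟨?_, fun hD => ⟨.inl hD, hW.subset hD⟩⟩
  rintro ⟨hD | hD, hDB⟩
  exacts [hD, absurd hDB (hZ'B D hD)]

theorem sum_interval_eq_sum_sum {M : Type*} [AddCommMonoid M] (hX : IsPartition V X)
    (hY : IsPartition V Y) (hXY : Refines Y X) (hB : B ∈ X)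
    (F : Finset (Finset α) → Finset (Finset α) → M) :
    ∑ Z ∈ interval V X Y, F (blocksIn Z B) (Z \ blocksIn Z B) =
      ∑ W ∈ interval B {B} (blocksIn Y B),
        ∑ Z' ∈ interval (V \ B) (X.erase B) (Y \ blocksIn Y B), F W Z' := by
  rw [← sum_product']
  refine sum_nbij' (fun Z => (blocksIn Z B, Z \ blocksIn Z B)) (fun p => p.1 ∪ p.2)
    (fun Z hZ => mem_product.2 ⟨blocksIn_mem_interval hX hY hB hZ,
      sdiff_blocksIn_mem_interval hX hY hB hZ⟩)
    (fun p hp => union_mem_interval hX hY hXY hB (mem_product.1 hp).1 (mem_product.1 hp).2)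
    (fun Z _ => union_sdiff_of_subset (blocksIn_subset Z B)) (fun ⟨W, Z'⟩ hp => ?_)
    (fun _ _ => rfl)
  obtain ⟨hW, hZ'⟩ := mem_product.1 hp
  obtain ⟨hblocks, hdisj⟩ := blocksIn_union_eq_and_disjoint
    ((mem_interval (.singleton (hX.nonempty hB)) (isPartition_blocksIn hX hY hXY hB)).1 hW).1
    ((mem_interval (hX.erase hB) (isPartition_sdiff_blocksIn hX hY hXY hB)).1 hZ').1
  simp only [hblocks, union_sdiff_cancel_left hdisj]

end Split

theorem sum_powerset_neg_one_pow_card_sdiff (s : Finset α) :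
    ∑ T ∈ s.powerset, (-1 : ℤ) ^ (s \ T).card = if s = ∅ then 1 else 0 := by
  rw [← sum_powerset_neg_one_pow_card]
  exact sum_nbij' (s \ ·) (s \ ·) (fun _ _ => mem_powerset.2 sdiff_subset)
    (fun _ _ => mem_powerset.2 sdiff_subset)
    (fun _ hT => Finset.sdiff_sdiff_eq_self (mem_powerset.1 hT))
    (fun _ hT => Finset.sdiff_sdiff_eq_self (mem_powerset.1 hT)) (fun _ _ => rfl)

section SetPartitions

def partitions (s : Finset α) : Finset (Finset (Finset α)) :=
  s.powerset.powerset.filter (IsPartition s)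

variable {s : Finset α}

theorem mem_partitions {P : Finset (Finset α)} : P ∈ partitions s ↔ IsPartition s P :=
  mem_filter.trans (and_iff_right_of_imp IsPartition.mem_powerset_powerset)

theorem partitions_empty : partitions (∅ : Finset α) = {∅} := by
  ext P
  rw [mem_partitions, mem_singleton]
  exact ⟨IsPartition.eq_empty, fun h => h ▸ .empty⟩

theorem sum_partitions_filter_mem {M : Type*} [AddCommMonoid M] {T : Finset α} (hTs : T ⊆ s)
    (hT : T.Nonempty) (F : ℕ → M) :
    ∑ P ∈ (partitions s).filter (T ∈ ·), F P.card =
      ∑ P ∈ partitions (s \ T), F (P.card + 1) := by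
  have hTP : ∀ P ∈ partitions (s \ T), T ∉ P := fun P hP hTP => by
    obtain ⟨x, hx⟩ := hT
    exact (mem_sdiff.1 ((mem_partitions.1 hP).subset hTP hx)).2 hx
  refine sum_nbij' (·.erase T) (insert T) (fun P hP => ?_) (fun P hP => ?_)
    (fun P hP => insert_erase (mem_filter.1 hP).2) (fun P hP => erase_insert (hTP P hP))
    (fun P hP => by rw [card_erase_add_one (mem_filter.1 hP).2])
  · obtain ⟨hP, hTP⟩ := mem_filter.1 hP
    exact mem_partitions.2 ((mem_partitions.1 hP).erase hTP)
  · have hins := (IsPartition.singleton hT).union (mem_partitions.1 hP) disjoint_sdiff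
    rw [union_sdiff_of_subset hTs, ← insert_eq] at hins
    exact mem_filter.2 ⟨mem_partitions.2 hins, mem_insert_self T P⟩

theorem sum_partitions_sum_mem {M : Type*} [AddCommMonoid M] (F : Finset α → ℕ → M) :
    ∑ P ∈ partitions s, ∑ T ∈ P, F T P.card =
      ∑ T ∈ s.powerset.erase ∅, ∑ P ∈ partitions (s \ T), F T (P.card + 1) := by
  rw [sum_comm' (t' := s.powerset.erase ∅) (s' := fun T => (partitions s).filter (T ∈ ·))]
  · refine sum_congr rfl fun T hT => ?_
    obtain ⟨hT, hTs⟩ := mem_erase.1 hT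
    exact sum_partitions_filter_mem (mem_powerset.1 hTs) (nonempty_iff_ne_empty.2 hT) (F T)
  · intro P T
    simp only [mem_filter, mem_erase, mem_powerset, mem_partitions]
    exact ⟨fun ⟨hP, hT⟩ => ⟨⟨hP, hT⟩, hP.1 T hT, hP.subset hT⟩,
      fun ⟨⟨hP, hT⟩, _⟩ => ⟨hP, hT⟩⟩

/-- Signed count of ordered partitions: distinguish one block `T`, then recurse on `s \ T`. -/
theorem sum_partitions_neg_one_pow_mul_factorial (s : Finset α) :
    ∑ P ∈ partitions s, (-1 : ℤ) ^ P.card * P.card ! = (-1) ^ s.card := by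
  induction s using Finset.strongInduction with | H s ih =>
  rcases s.eq_empty_or_nonempty with rfl | ⟨x, hx⟩
  · simp [partitions_empty]
  have hblock : ∀ P ∈ partitions s, (-1 : ℤ) ^ P.card * P.card ! =
      ∑ _T ∈ P, (-1 : ℤ) ^ P.card * ((P.card - 1)! : ℤ) := by
    intro P hP
    obtain ⟨T, hT, -⟩ := (mem_partitions.1 hP).exists_mem hx
    rw [sum_const, nsmul_eq_mul, ← Nat.mul_factorial_pred (card_ne_zero_of_mem hT)]
    push_cast
    ring
  calc ∑ P ∈ partitions s, (-1 : ℤ) ^ P.card * P.card !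
      = ∑ T ∈ s.powerset.erase ∅,
          ∑ P ∈ partitions (s \ T), (-1 : ℤ) ^ (P.card + 1) * P.card ! := by
        rw [sum_congr rfl hblock,
          sum_partitions_sum_mem fun _ n => (-1 : ℤ) ^ n * ((n - 1)! : ℤ)]
        rfl
    _ = ∑ T ∈ s.powerset.erase ∅, -(-1 : ℤ) ^ (s \ T).card := by
        refine sum_congr rfl fun T hT => ?_
        obtain ⟨hT, hTs⟩ := mem_erase.1 hT
        rw [← ih _ (sdiff_ssubset (mem_powerset.1 hTs) (nonempty_iff_ne_empty.2 hT)),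
          ← sum_neg_distrib]
        exact sum_congr rfl fun P _ => by ring
    _ = (-1) ^ s.card := by
        rw [sum_neg_distrib, sum_erase_eq_sub (empty_mem_powerset s),
          sum_powerset_neg_one_pow_card_sdiff, if_neg (ne_empty_of_mem hx), sdiff_empty]
        ring

end SetPartitions

/-- The Möbius value `μ(0̂, 1̂)` of the lattice of partitions of an `n`-element set. -/
def partitionMoebius (n : ℕ) : ℤ :=
  (-1) ^ (n - 1) * (n - 1)!

theorem sum_partitions_partitionMoebius {s : Finset α} (hs : s.Nonempty) :
    ∑ P ∈ partitions s, partitionMoebius P.card = if s.card = 1 then 1 else 0 := by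
  obtain ⟨c, hc⟩ := hs
  obtain ⟨s₀, hcs₀, rfl⟩ : ∃ s₀, c ∉ s₀ ∧ s = insert c s₀ :=
    ⟨s.erase c, notMem_erase c s, (insert_erase hc).symm⟩
  have hblock : ∀ P ∈ partitions (insert c s₀), partitionMoebius P.card =
      ∑ T ∈ P, if c ∈ T then partitionMoebius P.card else 0 := by
    intro P hP
    have hP := mem_partitions.1 hP
    obtain ⟨T, hT, hcT⟩ := hP.exists_mem hc
    rw [sum_eq_single_of_mem T hT fun T' hT' hne =>
      if_neg fun hcT' => hne (hP.eq_of_mem_of_mem hT' hT hcT' hcT), if_pos hcT]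
  calc ∑ P ∈ partitions (insert c s₀), partitionMoebius P.card
      = ∑ T ∈ (insert c s₀).powerset.erase ∅,
          if c ∈ T then (-1 : ℤ) ^ (insert c s₀ \ T).card else 0 := by
        rw [sum_congr rfl hblock, sum_partitions_sum_mem (fun T n =>
          if c ∈ T then partitionMoebius n else 0)]
        refine sum_congr rfl fun T _ => ?_
        split_ifs
        · rw [← sum_partitions_neg_one_pow_mul_factorial]
          simp [partitionMoebius]
        · exact sum_const_zero
    _ = ∑ T ∈ s₀.powerset, (-1 : ℤ) ^ (s₀ \ T).card := by
        rw [sum_erase (f := fun T => if c ∈ T then (-1 : ℤ) ^ (insert c s₀ \ T).card else 0) _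
          (if_neg (notMem_empty c)), sum_powerset_insert hcs₀, sum_eq_zero fun T hT =>
            if_neg fun hcT => hcs₀ (mem_powerset.1 hT hcT), zero_add]
        refine sum_congr rfl fun T _ => ?_
        rw [if_pos (mem_insert_self c T), insert_sdiff_insert, sdiff_insert_of_notMem hcs₀]
    _ = if (insert c s₀).card = 1 then 1 else 0 := by
        simp only [sum_powerset_neg_one_pow_card_sdiff, card_insert_of_notMem hcs₀,
          Nat.add_eq_right, card_eq_zero]

section Coarsenings

variable {V : Finset α} {W Y : Finset (Finset α)}

theorem isPartition_image_blocksIn (hW : IsPartition V W) (hY : IsPartition V Y)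
    (hYW : Refines Y W) : IsPartition Y (W.image (blocksIn Y)) := by
  refine ⟨?_, ?_, ?_⟩
  · simp only [mem_image]
    rintro _ ⟨T, hT, rfl⟩ hempty
    have hsup := sup_blocksIn hW hY hYW hT
    rw [hempty, sup_empty] at hsup
    exact hW.1 T hT hsup.symm
  · simp only [mem_image]
    rintro _ ⟨T, hT, rfl⟩ _ ⟨T', hT', rfl⟩ hne
    refine disjoint_iff_inter_eq_empty.1 (disjoint_left.2 fun C hC hC' => hne ?_)
    rw [mem_blocksIn] at hC hC'
    rw [hW.eq_of_subset_of_subset hT hT' (hY.nonempty hC.1) hC.2 hC'.2]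
  · ext C
    simp only [sup_image, Function.id_comp, mem_sup, mem_blocksIn]
    refine ⟨fun ⟨_, _, hC, _⟩ => hC, fun hC => ?_⟩
    obtain ⟨T, hT, hCT⟩ := hYW C hC
    exact ⟨T, hT, hC, hCT⟩

theorem image_sup_mem_interval (hV : V.Nonempty) (hY : IsPartition V Y)
    {P : Finset (Finset (Finset α))} (hP : IsPartition Y P) :
    P.image (·.sup id) ∈ interval V {V} Y := by
  refine (mem_interval (.singleton hV) hY).2 ⟨⟨?_, ?_, ?_⟩, ?_, fun C hC => ?_⟩
  · simp only [mem_image]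
    rintro _ ⟨S, hS, rfl⟩ hempty
    obtain ⟨C, hC⟩ := hP.nonempty hS
    exact hY.1 C (hP.subset hS hC) ((Finset.sup_eq_bot_iff _ _).1 hempty C hC)
  · simp only [mem_image]
    rintro _ ⟨S, hS, rfl⟩ _ ⟨S', hS', rfl⟩ hne
    refine disjoint_iff_inter_eq_empty.1 (Finset.disjoint_sup_left.2 fun C hC =>
      Finset.disjoint_sup_right.2 fun C' hC' =>
        hY.disjoint (hP.subset hS hC) (hP.subset hS' hC') ?_)
    rintro rfl
    have hSS' : S ≠ S' := fun h => hne (h ▸ rfl)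
    exact disjoint_left.1 (hP.disjoint hS hS' hSS') hC hC'
  · rw [sup_image, Function.id_comp, ← sup_biUnion, ← sup_eq_biUnion]
    exact (congrArg (·.sup id) hP.2.2).trans hY.2.2
  · intro _ hD
    obtain ⟨S, hS, rfl⟩ := mem_image.1 hD
    exact ⟨V, mem_singleton_self V, Finset.sup_le fun C hC => hY.subset (hP.subset hS hC)⟩
  · obtain ⟨S, hS, hCS⟩ := hP.exists_mem hC
    exact ⟨S.sup id, mem_image_of_mem _ hS, le_sup (f := id) hCS⟩

theorem sum_interval_singleton {M : Type*} [AddCommMonoid M] (hV : V.Nonempty)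
    (hY : IsPartition V Y) (F : ℕ → M) :
    ∑ W ∈ interval V {V} Y, F W.card = ∑ P ∈ partitions Y, F P.card := by
  have hsup : ∀ W ∈ interval V {V} Y, ∀ T ∈ W, (blocksIn Y T).sup id = T := by
    intro W hW T hT
    obtain ⟨hW, -, hYW⟩ := (mem_interval (.singleton hV) hY).1 hW
    exact sup_blocksIn hW hY hYW hT
  refine sum_nbij' (·.image (blocksIn Y)) (·.image (·.sup id)) (fun W hW => ?_)
    (fun P hP => image_sup_mem_interval hV hY (mem_partitions.1 hP)) (fun W hW => ?_)
    (fun P hP => ?_) (fun W hW => ?_)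
  · obtain ⟨hW, -, hYW⟩ := (mem_interval (.singleton hV) hY).1 hW
    exact mem_partitions.2 (isPartition_image_blocksIn hW hY hYW)
  · rw [image_image]
    exact (image_congr fun T hT => hsup W hW T hT).trans image_id
  · rw [image_image]
    exact (image_congr fun S hS => hY.blocksIn_sup ((mem_partitions.1 hP).subset hS)).trans
      image_id
  · rw [card_image_of_injOn fun T hT T' hT' h => by
      rw [← hsup W hW T hT, ← hsup W hW T' hT', h]]

end Coarsenings

def moebiusProd (X Y : Finset (Finset α)) : ℤ :=
  ∏ B ∈ X, partitionMoebius (blocksIn Y B).card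

section ProductFormula

variable {V : Finset α} {X Y Z : Finset (Finset α)} {B : Finset α}

theorem blocksIn_sdiff_blocksIn (hZ : IsPartition V Z) {B' : Finset α} (hBB' : Disjoint B B') :
    blocksIn (Z \ blocksIn Z B) B' = blocksIn Z B' := by
  ext D
  simp only [mem_blocksIn, mem_sdiff_blocksIn, and_assoc]
  refine ⟨fun ⟨hD, _, hDB'⟩ => ⟨hD, hDB'⟩,
    fun ⟨hD, hDB'⟩ => ⟨hD, fun hDB => ?_, hDB'⟩⟩
  exact (hZ.nonempty hD).ne_empty ((disjoint_self_iff_empty D).1 (hBB'.mono hDB hDB'))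

theorem moebiusProd_insert {X' : Finset (Finset α)} (hX : IsPartition V (insert B X'))
    (hBX' : B ∉ X') (hZ : IsPartition V Z) :
    moebiusProd (insert B X') Z =
      partitionMoebius (blocksIn Z B).card * moebiusProd X' (Z \ blocksIn Z B) := by
  rw [moebiusProd, prod_insert hBX', moebiusProd]
  refine congrArg _ (prod_congr rfl fun B' hB' => ?_)
  rw [blocksIn_sdiff_blocksIn hZ (hX.disjoint (mem_insert_self B X') (mem_insert_of_mem hB')
    fun h => hBX' (h ▸ hB'))]

theorem eq_iff_blocksIn_card_eq_one (hX : IsPartition V X) (hY : IsPartition V Y)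
    (hXY : Refines Y X) (hB : B ∈ X) :
    X = Y ↔ (blocksIn Y B).card = 1 ∧ X.erase B = Y \ blocksIn Y B := by
  have hsingle : (blocksIn Y B).card = 1 ↔ blocksIn Y B = {B} := by
    refine ⟨fun h => ?_, fun h => by rw [h, card_singleton]⟩
    obtain ⟨C, hC⟩ := card_eq_one.1 h
    have hsup := sup_blocksIn hX hY hXY hB
    rw [hC, sup_singleton, id] at hsup
    rw [hC, hsup]
  rw [hsingle]
  constructor
  · rintro rfl
    have hXB : blocksIn X B = {B} := by
      ext C
      rw [mem_blocksIn, mem_singleton]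
      exact ⟨fun ⟨hC, hCB⟩ => hX.eq_of_subset_of_subset hC hB (hX.nonempty hC) subset_rfl
        hCB, fun h => ⟨h ▸ hB, h ▸ subset_rfl⟩⟩
    rw [hXB, sdiff_singleton_eq_erase]
    exact ⟨rfl, rfl⟩
  · rintro ⟨h₁, h₂⟩
    rw [← union_sdiff_of_subset (blocksIn_subset Y B), ← h₂, h₁, ← insert_eq,
      insert_erase hB]

theorem interval_empty : interval (∅ : Finset α) ∅ ∅ = {∅} := by
  ext Z
  rw [mem_interval .empty .empty, mem_singleton]
  refine ⟨fun h => h.1.eq_empty, ?_⟩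
  rintro rfl
  exact ⟨.empty, refines_refl ∅, refines_refl ∅⟩

theorem sum_interval_moebiusProd (hX : IsPartition V X) (hY : IsPartition V Y)
    (hXY : Refines Y X) :
    ∑ Z ∈ interval V X Y, moebiusProd X Z = if X = Y then 1 else 0 := by
  induction X using Finset.induction_on generalizing V Y with
  | empty =>
    obtain rfl : V = ∅ := hX.2.2.symm
    obtain rfl := hY.eq_empty
    simp [interval_empty, moebiusProd]
  | insert B X' hBX' ih =>
    have hB := mem_insert_self B X'
    have hX' : (insert B X').erase B = X' := erase_insert hBX'
    have hYB := isPartition_blocksIn hX hY hXY hB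
    rw [sum_congr rfl fun Z hZ => moebiusProd_insert hX hBX' ((mem_interval hX hY).1 hZ).1,
      sum_interval_eq_sum_sum hX hY hXY hB fun W Z' =>
        partitionMoebius W.card * moebiusProd X' Z',
      ← sum_mul_sum, hX', sum_interval_singleton (hX.nonempty hB) hYB,
      sum_partitions_partitionMoebius (blocksIn_nonempty hX hY hXY hB)]
    have hX'₀ : IsPartition (V \ B) X' := hX' ▸ hX.erase hB
    rw [ih hX'₀ (isPartition_sdiff_blocksIn hX hY hXY hB) (hX' ▸ hXY.sdiff_blocksIn_erase),
      ite_zero_mul_ite_zero, mul_one]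
    exact if_congr (by rw [eq_iff_blocksIn_card_eq_one hX hY hXY hB, hX']) rfl rfl

end ProductFormula

theorem moebiusProd_eq {V : Finset α} {X Y : Finset (Finset α)} (hX : IsPartition V X)
    (hY : IsPartition V Y) (hXY : Refines Y X) :
    moebiusProd X Y =
      (-1) ^ (Y.card - X.card) * ∏ B ∈ X, (((blocksIn Y B).card - 1)! : ℤ) := by
  have hexp : ∑ B ∈ X, ((blocksIn Y B).card - 1) = Y.card - X.card := by
    rw [sum_tsub_distrib _ fun B hB => card_pos.2 (blocksIn_nonempty hX hY hXY hB),
      ← card_eq_sum_card_blocksIn hX hY hXY, ← card_eq_sum_ones]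
  rw [moebiusProd, ← hexp, ← prod_pow_eq_pow_sum, ← prod_mul_distrib]
  rfl

end PartitionLattice

open PartitionLattice

/-- The Möbius function of an interval in the partition lattice: if
`m` satisfies the defining recursion of the Möbius function
(`Σ_{X ≤ Z ≤ Y} m(X,Z) = δ_{X,Y}` for all partitions `X ≤ Y` of `I`), then
for partitions `X ≤ Y` of `I`,
`m(X,Y) = (-1)^{ℓ(Y)-ℓ(X)} ∏_{B ∈ X} (n_B − 1)!`, where `n_B` is the number of
blocks of `Y` contained in the block `B`; in particular
`m({I},X) = (-1)^{ℓ(X)-1} (ℓ(X)−1)!`. -/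
theorem moebius_partition_lattice {α : Type*} [DecidableEq α] (I : Finset α)
    (m : Finset (Finset α) → Finset (Finset α) → ℤ)
    (hm : ∀ X Y : Finset (Finset α), IsPartition I X → IsPartition I Y → PartLE X Y →
      (∑ Z ∈ (I.powerset.powerset).filter
          (fun Z => IsPartition I Z ∧ PartLE X Z ∧ PartLE Z Y), m X Z) =
        if X = Y then 1 else 0) :
    (∀ X Y : Finset (Finset α), IsPartition I X → IsPartition I Y → PartLE X Y →
      m X Y = (-1 : ℤ) ^ (Y.card - X.card) *
        ∏ B ∈ X, (Nat.factorial ((Y.filter fun C => C ⊆ B).card - 1) : ℤ)) ∧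
    (I.Nonempty → ∀ X : Finset (Finset α), IsPartition I X →
      m {I} X = (-1 : ℤ) ^ (X.card - 1) * (Nat.factorial (X.card - 1) : ℤ)) := by
  have hformula : ∀ X Y, IsPartition I X → IsPartition I Y → PartLE X Y →
      m X Y = (-1 : ℤ) ^ (Y.card - X.card) * ∏ B ∈ X, (((blocksIn Y B).card - 1)! : ℤ) := by
    intro X Y hX hY hXY
    rw [← moebiusProd_eq hX hY ((partLE_iff_refines hX hY).1 hXY)]
    refine eq_of_sum_interval_eq (fun X Y hX hY hXY => ?_) hX hY hXY
    rw [sum_interval_moebiusProd hX hY ((partLE_iff_refines hX hY).1 hXY)]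
    exact hm X Y hX hY hXY
  refine ⟨hformula, fun hI X hX => ?_⟩
  have hIX : PartLE {I} X := (partLE_iff_refines (.singleton hI) hX).2 fun C hC =>
    ⟨I, mem_singleton_self I, hX.subset hC⟩
  have hblocks : blocksIn X I = X := filter_true_of_mem fun C hC => hX.subset hC
  rw [hformula {I} X (.singleton hI) hX hIX, card_singleton, prod_singleton, hblocks]
end

section
/- The first Eulerian element is idempotent in the Tits algebra: for a nonempty finite set I, in the ℚ-algebra spanned by set compositions of I with multiplication the linearized Tits product, the element e_I = Σ_{F ⊨ I} (-1)^{ℓ(F)-1} (1/ℓ(F)) · F satisfies e_I · e_I = e_I, where ℓ(F) denotes the number of blocks of F and the sum is over all compositions F of I. -/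
/-- The product of the Tits algebra of `I` over `ℚ`: the bilinear extension of the
Tits product of set compositions to formal `ℚ`-linear combinations. -/
noncomputable def titsMul {α : Type*} [DecidableEq α]
    (x y : List (Finset α) →₀ ℚ) : List (Finset α) →₀ ℚ :=
  x.sum fun F a => y.sum fun G b => Finsupp.single (tits F G) (a * b)

/-!
Write `e = ∑_F w(ℓ F) F` with `w m = (-1)^(m-1)/m`. The one-block composition `[I]` is a
left identity, so `e * e = e + ∑_{F ≠ [I]} w(ℓ F) F * e`, and it suffices that `F * e = 0`
whenever `F` has at least two blocks. If `S` is the first block of such an `F`, then `F` refines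
`(S, I \ S)`, so `F * G = F * ((S, I \ S) * G)` by associativity, and it is enough that the
coefficients of `e` sum to zero on every fibre of `G ↦ (S, I \ S) * G`. Such a fibre consists
of the quasi-shuffles of the restrictions `G|S` and `G|(I \ S)`. Sorting quasi-shuffles by their
first block gives a three-term recursion, which identifies the sum of `w(ℓ G + t + 1)` over the
quasi-shuffles of words of lengths `p` and `q` as `(-1)^(t+p+q) (t+p)! (t+q)! / (t! (t+p+q+1)!)`;
the fibre sum is the case `t = -1`, where `1 / (-1)! = 0`.
-/

section TitsProduct

variable {α : Type*} [DecidableEq α]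

def restrict (S : Finset α) (G : List (Finset α)) : List (Finset α) :=
  (G.map fun T => S ∩ T).filter fun T => decide (T ≠ ∅)

theorem tits_eq_flatten (F G : List (Finset α)) :
    tits F G = (F.map fun S => restrict S G).flatten := rfl

@[simp] theorem restrict_nil (S : Finset α) : restrict S [] = [] := rfl

theorem restrict_cons (S T : Finset α) (G : List (Finset α)) :
    restrict S (T :: G) = if S ∩ T = ∅ then restrict S G else (S ∩ T) :: restrict S G := by
  by_cases h : S ∩ T = ∅ <;> simp [restrict, h]

theorem restrict_append (S : Finset α) (G G' : List (Finset α)) :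
    restrict S (G ++ G') = restrict S G ++ restrict S G' := by
  simp [restrict]

@[simp] theorem restrict_empty (G : List (Finset α)) : restrict ∅ G = [] := by
  simp [restrict]

theorem restrict_restrict (S T : Finset α) (G : List (Finset α)) :
    restrict S (restrict T G) = restrict (S ∩ T) G := by
  induction G with
  | nil => rfl
  | cons U G ih =>
    rw [restrict_cons T, restrict_cons (S ∩ T), Finset.inter_assoc]
    split_ifs with hTU hSTU hSTU <;> simp_all [restrict_cons]

@[simp] theorem tits_nil_left (G : List (Finset α)) : tits [] G = [] := rfl

@[simp] theorem tits_cons_left (S : Finset α) (F G : List (Finset α)) :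
    tits (S :: F) G = restrict S G ++ tits F G := rfl

theorem tits_append_left (F F' G : List (Finset α)) :
    tits (F ++ F') G = tits F G ++ tits F' G := by
  simp [tits_eq_flatten]

theorem restrict_tits (S : Finset α) (K G : List (Finset α)) :
    restrict S (tits K G) = tits (restrict S K) G := by
  induction K with
  | nil => rfl
  | cons T K ih =>
    rw [tits_cons_left, restrict_append, restrict_restrict, ih, restrict_cons]
    split_ifs with hST <;> simp [hST]

theorem tits_assoc (F K G : List (Finset α)) : tits (tits F K) G = tits F (tits K G) := by
  induction F with
  | nil => rfl
  | cons S F ih => rw [tits_cons_left, tits_append_left, ih, ← restrict_tits, tits_cons_left]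

theorem tits_pair (A B : Finset α) (G : List (Finset α)) :
    tits [A, B] G = restrict A G ++ restrict B G := by
  simp

end TitsProduct

section Compositions

variable {α : Type*} [DecidableEq α] {I A T : Finset α} {G : List (Finset α)}

theorem mem_foldr_union {a : α} : a ∈ G.foldr (· ∪ ·) ∅ ↔ ∃ T ∈ G, a ∈ T := by
  induction G with
  | nil => simp
  | cons U G ih => simp [ih]

theorem IsComposition.subset_of_mem (hG : IsComposition I G) (hT : T ∈ G) : T ⊆ I :=
  fun _ ha => hG.2.2 ▸ mem_foldr_union.mpr ⟨T, hT, ha⟩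

@[simp] theorem isComposition_nil_iff : IsComposition I [] ↔ I = ∅ := by
  simp [IsComposition, eq_comm]

theorem IsComposition.ne_nil (hG : IsComposition I G) (hI : I.Nonempty) : G ≠ [] := by
  rintro rfl
  exact hI.ne_empty (isComposition_nil_iff.mp hG)

theorem IsComposition.eq_nil_of_empty (hG : IsComposition ∅ G) : G = [] := by
  cases G with
  | nil => rfl
  | cons T G =>
    exact absurd (Finset.subset_empty.mp (hG.subset_of_mem (by simp))) (hG.1 T (by simp))

theorem isComposition_cons_iff :
    IsComposition I (T :: G) ↔ T ≠ ∅ ∧ T ⊆ I ∧ IsComposition (I \ T) G := by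
  constructor
  · intro hG
    have hdisj : Disjoint T (G.foldr (· ∪ ·) ∅) := by
      refine Finset.disjoint_left.mpr fun a haT haG => ?_
      obtain ⟨U, hU, haU⟩ := mem_foldr_union.mp haG
      have : T ∩ U = ∅ := List.rel_of_pairwise_cons hG.2.1 hU
      exact Finset.notMem_empty a (this ▸ Finset.mem_inter.mpr ⟨haT, haU⟩)
    refine ⟨hG.1 T (by simp), hG.subset_of_mem (by simp),
      fun B hB => hG.1 B (by simp [hB]), hG.2.1.of_cons, ?_⟩
    rw [← hG.2.2, List.foldr_cons, Finset.union_sdiff_cancel_left hdisj]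
  · rintro ⟨hT, hTI, hG⟩
    refine ⟨?_, List.pairwise_cons.mpr ⟨fun U hU => ?_, hG.2.1⟩, ?_⟩
    · simpa [hT] using hG.1
    · exact Finset.disjoint_iff_inter_eq_empty.mp
        (Finset.disjoint_sdiff.mono_right (hG.subset_of_mem hU))
    · rw [List.foldr_cons, hG.2.2, Finset.union_sdiff_of_subset hTI]

theorem mem_restrict {U : Finset α} :
    U ∈ restrict A G ↔ U ≠ ∅ ∧ ∃ T ∈ G, A ∩ T = U := by
  simp [restrict, and_comm]

theorem restrict_congr {A' : Finset α} (h : ∀ T ∈ G, A ∩ T = A' ∩ T) :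
    restrict A G = restrict A' G := by
  simp only [restrict, List.map_congr_left h]

theorem restrict_eq_self (h : ∀ T ∈ G, T ≠ ∅ ∧ T ⊆ A) : restrict A G = G := by
  induction G with
  | nil => rfl
  | cons T G ih =>
    obtain ⟨hT, hTA⟩ := h T (by simp)
    rw [restrict_cons, Finset.inter_eq_right.mpr hTA, if_neg hT,
      ih fun U hU => h U (by simp [hU])]

theorem IsComposition.restrict_self (hG : IsComposition I G) : restrict I G = G :=
  restrict_eq_self fun T hT => ⟨hG.1 T hT, hG.subset_of_mem hT⟩

theorem IsComposition.eq_iff_restrict_eq {M : List (Finset α)} (hM : IsComposition I M) :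
    G = M ↔ IsComposition I G ∧ restrict I G = M :=
  ⟨by rintro rfl; exact ⟨hM, hM.restrict_self⟩,
    fun ⟨hG, h⟩ => hG.restrict_self.symm.trans h⟩

theorem isComposition_restrict (hG : IsComposition I G) (hA : A ⊆ I) :
    IsComposition A (restrict A G) := by
  refine ⟨fun U hU => (mem_restrict.mp hU).1, ?_, ?_⟩
  · refine (List.pairwise_map.mpr (hG.2.1.imp fun {S T} hST => ?_)).filter _
    rw [Finset.inter_inter_inter_comm, hST, Finset.inter_empty]
  · ext a
    simp only [mem_foldr_union, mem_restrict]
    constructor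
    · rintro ⟨_, ⟨-, T, -, rfl⟩, ha⟩
      exact Finset.mem_of_mem_inter_left ha
    · intro ha
      obtain ⟨T, hT, haT⟩ := mem_foldr_union.mp (hG.2.2 ▸ hA ha)
      have haAT : a ∈ A ∩ T := Finset.mem_inter.mpr ⟨ha, haT⟩
      exact ⟨A ∩ T, ⟨Finset.nonempty_iff_ne_empty.mp ⟨a, haAT⟩, T, hT, rfl⟩, haAT⟩

end Compositions

section EulerianWeight

open Nat

def eulerianWeight (m : ℕ) : ℚ := (-1) ^ (m - 1) / m

def quasiShuffleWeight (t p q : ℕ) : ℚ :=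
  (-1) ^ (t + p + q) * ((t + p)! * (t + q)!) / (t ! * (t + p + q + 1)!)

theorem eulerianWeight_succ (m : ℕ) : eulerianWeight (m + 1) = (-1) ^ m / (m + 1) := by
  simp [eulerianWeight]

theorem quasiShuffleWeight_zero_right (t p : ℕ) :
    quasiShuffleWeight t p 0 = eulerianWeight (p + (t + 1)) := by
  rw [quasiShuffleWeight, show p + (t + 1) = t + p + 1 by ring, eulerianWeight_succ,
    add_zero, add_zero, factorial_succ]
  field_simp
  push_cast
  ring

theorem quasiShuffleWeight_comm (t p q : ℕ) :
    quasiShuffleWeight t p q = quasiShuffleWeight t q p := by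
  rw [quasiShuffleWeight, quasiShuffleWeight, add_right_comm t p q, mul_comm ((t + p)! : ℚ)]

theorem quasiShuffleWeight_succ_succ (t p q : ℕ) :
    quasiShuffleWeight t (p + 1) (q + 1) = quasiShuffleWeight (t + 1) p (q + 1) +
      quasiShuffleWeight (t + 1) (p + 1) q + quasiShuffleWeight (t + 1) p q := by
  simp only [quasiShuffleWeight, ← add_assoc, add_right_comm _ 1, factorial_succ]
  push_cast
  field_simp
  ring

theorem quasiShuffleWeight_zero_recursion_eq_zero (p q : ℕ) :
    quasiShuffleWeight 0 p (q + 1) + quasiShuffleWeight 0 (p + 1) q +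
      quasiShuffleWeight 0 p q = 0 := by
  simp only [quasiShuffleWeight, zero_add, show p + (q + 1) = p + q + 1 by ring,
    show p + 1 + q = p + q + 1 by ring, factorial_succ]
  push_cast
  field_simp
  ring

end EulerianWeight

section QuasiShuffleSums

variable {β : Type*} [Union β]

def quasiShuffles : List β → List β → List (List β)
  | [], M => [M]
  | x :: L, [] => [x :: L]
  | x :: L, y :: M =>
    (quasiShuffles L (y :: M)).map (x :: ·) ++ (quasiShuffles (x :: L) M).map (y :: ·) ++
      (quasiShuffles L M).map ((x ∪ y) :: ·)

theorem sum_eulerianWeight_quasiShuffles (t : ℕ) (L M : List β) :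
    ((quasiShuffles L M).map fun G => eulerianWeight (G.length + (t + 1))).sum =
      quasiShuffleWeight t L.length M.length := by
  induction L, M using quasiShuffles.induct generalizing t with
  | case1 M =>
    simp [quasiShuffles, quasiShuffleWeight_comm t 0, quasiShuffleWeight_zero_right]
  | case2 x L => simp [quasiShuffles, quasiShuffleWeight_zero_right]
  | case3 x L y M ih₁ ih₂ ih₃ =>
    simp only [List.length_cons] at ih₁ ih₂ ⊢
    rw [quasiShuffleWeight_succ_succ, ← ih₁, ← ih₂, ← ih₃]
    simp [quasiShuffles, Function.comp_def, add_assoc, add_comm 1]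

theorem sum_eulerianWeight_quasiShuffles_cons_cons (x y : β) (L M : List β) :
    ((quasiShuffles (x :: L) (y :: M)).map fun G => eulerianWeight G.length).sum = 0 := by
  have h := quasiShuffleWeight_zero_recursion_eq_zero L.length M.length
  rw [← List.length_cons (a := y), ← List.length_cons (a := x)] at h
  simp only [← sum_eulerianWeight_quasiShuffles, zero_add] at h
  simpa [quasiShuffles, Function.comp_def, add_assoc] using h

end QuasiShuffleSums

section QuasiShuffles

variable {α : Type*} [DecidableEq α] {A B T x y : Finset α} {G L M LA LB : List (Finset α)}

def IsQuasiShuffle (A B : Finset α) (LA LB G : List (Finset α)) : Prop :=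
  IsComposition (A ∪ B) G ∧ restrict A G = LA ∧ restrict B G = LB

theorem IsComposition.restrict_sdiff {I : Finset α} (hG : IsComposition (I \ T) G) :
    restrict (A \ T) G = restrict A G :=
  restrict_congr fun U hU => by
    have hTU : Disjoint T U := Finset.disjoint_sdiff.mono_right (hG.subset_of_mem hU)
    rw [Finset.sdiff_inter_right_comm,
      Finset.sdiff_eq_self_of_disjoint (hTU.symm.mono_left Finset.inter_subset_right)]

theorem isQuasiShuffle_cons_iff (hT : T ≠ ∅) (hTAB : T ⊆ A ∪ B) :
    IsQuasiShuffle A B (restrict A [T] ++ LA) (restrict B [T] ++ LB) (T :: G) ↔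
      IsQuasiShuffle (A \ T) (B \ T) LA LB G := by
  rw [IsQuasiShuffle, IsQuasiShuffle, isComposition_cons_iff, ← Finset.union_sdiff_distrib,
    ← List.singleton_append, restrict_append, restrict_append, List.append_cancel_left_eq,
    List.append_cancel_left_eq]
  constructor
  · rintro ⟨⟨-, -, hG⟩, hA, hB⟩
    exact ⟨hG, by rwa [hG.restrict_sdiff], by rwa [hG.restrict_sdiff]⟩
  · rintro ⟨hG, hA, hB⟩
    exact ⟨⟨hT, hTAB, hG⟩, by rwa [← hG.restrict_sdiff], by rwa [← hG.restrict_sdiff]⟩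

theorem IsQuasiShuffle.head_eq (h : IsQuasiShuffle A B (x :: L) (y :: M) (T :: G)) :
    T = x ∨ T = y ∨ T = x ∪ y := by
  obtain ⟨hG, hA, hB⟩ := h
  obtain ⟨hT, hTAB, -⟩ := isComposition_cons_iff.mp hG
  have hT_eq : A ∩ T ∪ B ∩ T = T := by
    rw [← Finset.union_inter_distrib_right, Finset.inter_eq_right.mpr hTAB]
  rw [restrict_cons] at hA hB
  split_ifs at hA hB with hAT hBT hBT
  · exact absurd (by rw [← hT_eq, hAT, hBT, Finset.union_empty]) hT
  · right; left
    rw [← hT_eq, hAT, Finset.empty_union, (List.cons_eq_cons.mp hB).1]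
  · left
    rw [← hT_eq, hBT, Finset.union_empty, (List.cons_eq_cons.mp hA).1]
  · right; right
    rw [← hT_eq, (List.cons_eq_cons.mp hA).1, (List.cons_eq_cons.mp hB).1]

theorem isQuasiShuffle_cons_cons_iff (hAB : Disjoint A B) (hx : x ≠ ∅) (hxA : x ⊆ A)
    (hy : y ≠ ∅) (hyB : y ⊆ B) :
    IsQuasiShuffle A B (x :: L) (y :: M) (T :: G) ↔
      (T = x ∧ IsQuasiShuffle (A \ x) B L (y :: M) G) ∨
      (T = y ∧ IsQuasiShuffle A (B \ y) (x :: L) M G) ∨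
      (T = x ∪ y ∧ IsQuasiShuffle (A \ x) (B \ y) L M G) := by
  have hBx : B \ x = B := Finset.sdiff_eq_self_of_disjoint (hAB.symm.mono_right hxA)
  have hAy : A \ y = A := Finset.sdiff_eq_self_of_disjoint (hAB.mono_right hyB)
  have head_x := isQuasiShuffle_cons_iff (A := A) (B := B) (LA := L) (LB := y :: M) (G := G) hx
    (hxA.trans Finset.subset_union_left)
  have head_y := isQuasiShuffle_cons_iff (A := A) (B := B) (LA := x :: L) (LB := M) (G := G) hy
    (hyB.trans Finset.subset_union_right)
  have head_xy := isQuasiShuffle_cons_iff (A := A) (B := B) (LA := L) (LB := M) (G := G)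
    (fun h => hx (Finset.union_eq_empty.mp h).1) (Finset.union_subset_union hxA hyB)
  simp only [restrict_cons, restrict_nil, Finset.inter_eq_right.mpr hxA,
    Finset.inter_eq_right.mpr hyB, Finset.inter_union_distrib_left,
    Finset.disjoint_iff_inter_eq_empty.mp (hAB.symm.mono_right hxA),
    Finset.disjoint_iff_inter_eq_empty.mp (hAB.mono_right hyB), Finset.union_empty,
    Finset.empty_union, hx, hy, if_true, if_false, Finset.sdiff_union_distrib, hBx, hAy,
    Finset.inter_eq_left.mpr Finset.sdiff_subset, Finset.inter_eq_right.mpr Finset.sdiff_subset,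
    List.nil_append, List.singleton_append] at head_x head_y head_xy
  constructor
  · intro h
    rcases h.head_eq with rfl | rfl | rfl
    exacts [Or.inl ⟨rfl, head_x.mp h⟩, Or.inr (Or.inl ⟨rfl, head_y.mp h⟩),
      Or.inr (Or.inr ⟨rfl, head_xy.mp h⟩)]
  · rintro (⟨rfl, h⟩ | ⟨rfl, h⟩ | ⟨rfl, h⟩)
    exacts [head_x.mpr h, head_y.mpr h, head_xy.mpr h]

theorem mem_quasiShuffles_iff (hAB : Disjoint A B) (hLA : IsComposition A LA)
    (hLB : IsComposition B LB) : G ∈ quasiShuffles LA LB ↔ IsQuasiShuffle A B LA LB G := by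
  induction LA, LB using quasiShuffles.induct generalizing A B G with
  | case1 M =>
    obtain rfl := isComposition_nil_iff.mp hLA
    simpa [quasiShuffles, IsQuasiShuffle] using IsComposition.eq_iff_restrict_eq hLB
  | case2 x L =>
    obtain rfl := isComposition_nil_iff.mp hLB
    simpa [quasiShuffles, IsQuasiShuffle] using IsComposition.eq_iff_restrict_eq hLA
  | case3 x L y M ih₁ ih₂ ih₃ =>
    obtain ⟨hx, hxA, hL⟩ := isComposition_cons_iff.mp hLA
    obtain ⟨hy, hyB, hM⟩ := isComposition_cons_iff.mp hLB
    cases G with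
    | nil => simp [quasiShuffles, IsQuasiShuffle]
    | cons T G =>
      rw [isQuasiShuffle_cons_cons_iff hAB hx hxA hy hyB,
        ← ih₁ (hAB.mono_left Finset.sdiff_subset) hL hLB,
        ← ih₂ (hAB.mono_right Finset.sdiff_subset) hLA hM,
        ← ih₃ ((hAB.mono_left Finset.sdiff_subset).mono_right Finset.sdiff_subset) hL hM]
      simp [quasiShuffles, eq_comm, and_comm]

theorem nodup_quasiShuffles (hL : ∀ x ∈ L, x ≠ ∅) (hM : ∀ y ∈ M, y ≠ ∅)
    (hLM : ∀ x ∈ L, ∀ y ∈ M, Disjoint x y) : (quasiShuffles L M).Nodup := by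
  induction L, M using quasiShuffles.induct with
  | case1 M => simp [quasiShuffles]
  | case2 x L => simp [quasiShuffles]
  | case3 x L y M ih₁ ih₂ ih₃ =>
    have hx := hL x List.mem_cons_self
    have hy := hM y List.mem_cons_self
    have hxy := hLM x List.mem_cons_self y List.mem_cons_self
    have hne₁ : x ≠ y := fun h => hx (by simpa [h] using hxy)
    have hne₂ : x ≠ x ∪ y := fun h => hy (by
      simpa using hxy.symm.eq_bot_of_le (Finset.subset_union_right.trans h.symm.subset))
    have hne₃ : y ≠ x ∪ y := fun h => hx (by
      simpa using hxy.eq_bot_of_le (Finset.subset_union_left.trans h.symm.subset))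
    have hL' := fun x' h => hL x' (List.mem_cons_of_mem x h)
    have hM' := fun y' h => hM y' (List.mem_cons_of_mem y h)
    simp only [quasiShuffles, List.nodup_append]
    refine ⟨⟨(ih₁ hL' hM fun x' h => hLM x' (List.mem_cons_of_mem x h)).map
        List.cons_injective,
      (ih₂ hL hM' fun x' h y' h' => hLM x' h y' (List.mem_cons_of_mem y h')).map
        List.cons_injective, ?_⟩,
      (ih₃ hL' hM' fun x' h y' h' => hLM x' (List.mem_cons_of_mem x h) y'
        (List.mem_cons_of_mem y h')).map List.cons_injective, ?_⟩
    all_goals simp [or_imp, forall_and, hne₁, hne₂, hne₃]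

end QuasiShuffles

theorem sum_smul_comp_eq_zero_of_sum_fiber_eq_zero {ι κ R M : Type*} [DecidableEq κ]
    [Semiring R] [AddCommMonoid M] [Module R M] (s : Finset ι) (g : ι → κ) (c : ι → R)
    (v : κ → M)
    (h : ∀ i ∈ s, ∑ j ∈ s with g j = g i, c j = 0) : ∑ i ∈ s, c i • v (g i) = 0 := by
  rw [← Finset.sum_fiberwise_of_maps_to fun i hi => Finset.mem_image_of_mem g hi]
  refine Finset.sum_eq_zero fun k hk => ?_
  obtain ⟨i, hi, rfl⟩ := Finset.mem_image.mp hk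
  rw [Finset.sum_congr rfl fun j hj => by rw [(Finset.mem_filter.mp hj).2], ← Finset.sum_smul,
    h i hi, zero_smul]

section EulerianIdempotent

variable {α : Type*} [DecidableEq α] {I A B S : Finset α} {C : Finset (List (Finset α))}
  {F G G₀ : List (Finset α)}

theorem titsMul_sum_single (s t : Finset (List (Finset α))) (f g : List (Finset α) → ℚ) :
    titsMul (∑ F ∈ s, Finsupp.single F (f F)) (∑ G ∈ t, Finsupp.single G (g G)) =
      ∑ F ∈ s, ∑ G ∈ t, Finsupp.single (tits F G) (f F * g G) := by
  have zero_mul_single (F G : List (Finset α)) (b : ℚ) :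
      Finsupp.single (tits F G) (0 * b) = 0 := by rw [zero_mul, Finsupp.single_zero]
  have mul_zero_single (F G : List (Finset α)) (a : ℚ) :
      Finsupp.single (tits F G) (a * 0) = 0 := by rw [mul_zero, Finsupp.single_zero]
  rw [titsMul, ← Finsupp.sum_finsetSum_index
    (by simp only [zero_mul_single, Finsupp.sum_fun_zero, implies_true])
    (by simp only [add_mul, Finsupp.single_add, Finsupp.sum_add, implies_true])]
  refine Finset.sum_congr rfl fun F _ => ?_
  rw [Finsupp.sum_single_index (by simp only [zero_mul_single, Finsupp.sum_fun_zero]),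
    ← Finsupp.sum_finsetSum_index (fun G => mul_zero_single F G _)
      (by simp only [mul_add, Finsupp.single_add, implies_true])]
  exact Finset.sum_congr rfl fun G _ => Finsupp.sum_single_index (mul_zero_single F G _)

theorem restrict_tits_pair_left (hAB : Disjoint A B) :
    restrict A (tits [A, B] G) = restrict A G := by
  rw [tits_pair, restrict_append, restrict_restrict, restrict_restrict, Finset.inter_self,
    Finset.disjoint_iff_inter_eq_empty.mp hAB, restrict_empty, List.append_nil]

theorem restrict_tits_pair_right (hAB : Disjoint A B) :
    restrict B (tits [A, B] G) = restrict B G := by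
  rw [tits_pair, restrict_append, restrict_restrict, restrict_restrict, Finset.inter_self,
    Finset.disjoint_iff_inter_eq_empty.mp hAB.symm, restrict_empty, List.nil_append]

theorem tits_pair_eq_tits_pair_iff (hAB : Disjoint A B) :
    tits [A, B] G = tits [A, B] G₀ ↔
      restrict A G = restrict A G₀ ∧ restrict B G = restrict B G₀ :=
  ⟨fun h => ⟨by simpa only [restrict_tits_pair_left hAB] using congrArg (restrict A) h,
      by simpa only [restrict_tits_pair_right hAB] using congrArg (restrict B) h⟩,
    fun ⟨hA, hB⟩ => by rw [tits_pair, tits_pair, hA, hB]⟩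

theorem filter_tits_pair_eq_toFinset_quasiShuffles (hAB : Disjoint A B)
    (hC : ∀ G, G ∈ C ↔ IsComposition (A ∪ B) G) (hG₀ : IsComposition (A ∪ B) G₀) :
    {G ∈ C | tits [A, B] G = tits [A, B] G₀} =
      (quasiShuffles (restrict A G₀) (restrict B G₀)).toFinset := by
  ext G
  rw [Finset.mem_filter, hC, tits_pair_eq_tits_pair_iff hAB, List.mem_toFinset,
    mem_quasiShuffles_iff hAB (isComposition_restrict hG₀ Finset.subset_union_left)
      (isComposition_restrict hG₀ Finset.subset_union_right), IsQuasiShuffle]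

theorem sum_eulerianWeight_filter_tits_pair_eq (hAB : Disjoint A B) (hA : A.Nonempty)
    (hB : B.Nonempty) (hC : ∀ G, G ∈ C ↔ IsComposition (A ∪ B) G) (hG₀ : G₀ ∈ C) :
    ∑ G ∈ C with tits [A, B] G = tits [A, B] G₀, eulerianWeight G.length = 0 := by
  have hG₀ := (hC G₀).mp hG₀
  have hLA := isComposition_restrict hG₀ Finset.subset_union_left
  have hLB := isComposition_restrict hG₀ Finset.subset_union_right
  have hnodup := nodup_quasiShuffles hLA.1 hLB.1 fun x hx y hy =>
    (hAB.mono (hLA.subset_of_mem hx) (hLB.subset_of_mem hy))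
  rw [filter_tits_pair_eq_toFinset_quasiShuffles hAB hC hG₀, List.sum_toFinset _ hnodup]
  obtain ⟨x, L, hxL⟩ := List.exists_cons_of_ne_nil (hLA.ne_nil hA)
  obtain ⟨y, M, hyM⟩ := List.exists_cons_of_ne_nil (hLB.ne_nil hB)
  rw [hxL, hyM]
  exact sum_eulerianWeight_quasiShuffles_cons_cons x y L M

theorem tits_eq_self {K : List (Finset α)} (h : ∀ T ∈ F, restrict T K = [T]) :
    tits F K = F := by
  induction F with
  | nil => rfl
  | cons T F ih =>
    rw [tits_cons_left, h T List.mem_cons_self, ih fun U hU => h U (List.mem_cons_of_mem T hU),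
      List.singleton_append]

theorem IsComposition.tits_pair_head_eq_self {rest : List (Finset α)}
    (hF : IsComposition I (S :: rest)) :
    tits (S :: rest) [S, I \ S] = S :: rest := by
  obtain ⟨hS, -, hrest⟩ := isComposition_cons_iff.mp hF
  refine tits_eq_self fun T hT => ?_
  rcases List.mem_cons.mp hT with rfl | hT
  · simp [restrict_cons, hS]
  · have hTS : T ∩ S = ∅ := by
      rw [Finset.inter_comm]; exact List.rel_of_pairwise_cons hF.2.1 hT
    simp [restrict_cons, hTS, Finset.inter_eq_left.mpr (hrest.subset_of_mem hT), hrest.1 T hT]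

theorem sum_single_tits_eq_zero (hI : I.Nonempty) (hC : ∀ G, G ∈ C ↔ IsComposition I G)
    (hF : IsComposition I F) (hFI : F ≠ [I]) (a : ℚ) :
    ∑ G ∈ C, Finsupp.single (tits F G) (a * eulerianWeight G.length) = 0 := by
  obtain ⟨S, rest, rfl⟩ := List.exists_cons_of_ne_nil (hF.ne_nil hI)
  obtain ⟨hS, hSI, hrest⟩ := isComposition_cons_iff.mp hF
  have hIS : (I \ S).Nonempty := by
    refine Finset.nonempty_iff_ne_empty.mpr fun h => hFI ?_
    rw [h] at hrest
    rw [hrest.eq_nil_of_empty, hSI.antisymm (Finset.sdiff_eq_empty_iff_subset.mp h)]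
  have hunion : S ∪ I \ S = I := Finset.union_sdiff_of_subset hSI
  calc ∑ G ∈ C, Finsupp.single (tits (S :: rest) G) (a * eulerianWeight G.length)
      = ∑ G ∈ C, eulerianWeight G.length •
          Finsupp.single (tits (S :: rest) (tits [S, I \ S] G)) a := by
        refine Finset.sum_congr rfl fun G _ => ?_
        rw [← tits_assoc, hF.tits_pair_head_eq_self, Finsupp.smul_single, smul_eq_mul, mul_comm]
    _ = 0 := sum_smul_comp_eq_zero_of_sum_fiber_eq_zero C (tits [S, I \ S])
          (fun G => eulerianWeight G.length) (fun H => Finsupp.single (tits (S :: rest) H) a)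
          fun G₀ hG₀ =>
        sum_eulerianWeight_filter_tits_pair_eq Finset.disjoint_sdiff
          (Finset.nonempty_iff_ne_empty.mpr hS) hIS (by rwa [hunion]) hG₀

end EulerianIdempotent

/-- The first Eulerian element
`e_I = Σ_{F ⊨ I} (-1)^{ℓ(F)-1} (1/ℓ(F)) · F`
is idempotent in the Tits algebra of a nonempty finite set `I`
(here `C` is the set of all compositions of `I`). -/
theorem eulerian_idempotent {α : Type*} [DecidableEq α] (I : Finset α)
    (hI : I.Nonempty) (C : Finset (List (Finset α)))
    (hC : ∀ F, F ∈ C ↔ IsComposition I F) :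
    titsMul (∑ F ∈ C, Finsupp.single F ((-1 : ℚ) ^ (F.length - 1) / (F.length : ℚ)))
        (∑ F ∈ C, Finsupp.single F ((-1 : ℚ) ^ (F.length - 1) / (F.length : ℚ))) =
      ∑ F ∈ C, Finsupp.single F ((-1 : ℚ) ^ (F.length - 1) / (F.length : ℚ)) := by
  have hIC : [I] ∈ C :=
    (hC [I]).mpr ⟨by simpa using hI.ne_empty, List.pairwise_singleton _ _, by simp⟩
  change titsMul (∑ F ∈ C, Finsupp.single F (eulerianWeight F.length))
    (∑ G ∈ C, Finsupp.single G (eulerianWeight G.length)) =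
      ∑ G ∈ C, Finsupp.single G (eulerianWeight G.length)
  rw [titsMul_sum_single, Finset.sum_eq_single_of_mem [I] hIC fun F hF hFI =>
    sum_single_tits_eq_zero hI hC ((hC F).mp hF) hFI _]
  refine Finset.sum_congr rfl fun G hG => ?_
  have hweight : eulerianWeight [I].length = 1 := by simp [eulerianWeight]
  rw [tits_cons_left, tits_nil_left, List.append_nil, ((hC G).mp hG).restrict_self, hweight,
    one_mul]
end
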